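/- arXiv:1712.00744 — 4 statements merged into one kernel-verified Lean document; each statement's English description precedes it below -/
import Mathlib

section
/- Let P ∈ ℍ[X] be a monic nonconstant quaternionic polynomial. Then the compact set K_{C_I}(P^I) depends continuously on I ∈ S; that is, the map I ↦ K_{C_I}(P^I) from the sphere of imaginary units S to the nonempty compact subsets of ℍ is continuous with respect to the Hausdorff distance. -/
open Polynomial
open scoped Classical RealInnerProductSpace ENNReal

noncomputable section

abbrev Hq : Type := Quaternion ℝ

/-- Right evaluation of a quaternionic polynomial: `P(x) = ∑ x^k * a_k`. -/
def evalQ (P : Hq[X]) (x : Hq) : Hq := P.sum fun k a => x ^ k * a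

/-- Zero set of a quaternionic polynomial (w.r.t. right evaluation). -/
def VQ (P : Hq[X]) : Set Hq := {x | evalQ P x = 0}

/-- Conjugate polynomial: coefficients conjugated. -/
def conjPoly (P : Hq[X]) : Hq[X] := P.sum fun k a => C (star a) * X ^ k

/-- Normal polynomial `N(P) = P * Pᶜ`. -/
def normalPoly (P : Hq[X]) : Hq[X] := P * conjPoly P

/-- The conjugacy sphere `S_x = {p x p⁻¹ : p ≠ 0}`. -/
def sphereOf (x : Hq) : Set Hq := {y | ∃ p : Hq, p ≠ 0 ∧ y = p * x * p⁻¹}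

/-- `P` is a Gauss-Lucas polynomial: `V(P') ⊆ K(N(P))`. -/
def GaussLucas (P : Hq[X]) : Prop :=
  VQ (derivative P) ⊆ convexHull ℝ (VQ (normalPoly P))

/-- The sphere of imaginary units. -/
def sphereS : Set Hq := {I | I ^ 2 = -1}

/-- The complex plane `C_I = ℝ + ℝI`. -/
def Cplane (I : Hq) : Set Hq := {x | ∃ a b : ℝ, x = algebraMap ℝ Hq a + b • I}

/-- Orthogonal projection onto `C_I`: `π_I(a) = ⟪a,1⟫•1 + ⟪a,I⟫•I`. -/
def piProj (I a : Hq) : Hq := (@inner ℝ Hq _ a (1 : Hq)) • (1 : Hq) + (@inner ℝ Hq _ a I) • I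

/-- The polynomial `P^I` with coefficients projected onto `C_I`. -/
def projPoly (I : Hq) (P : Hq[X]) : Hq[X] := P.sum fun k a => C (piProj I a) * X ^ k

/-- `K_{C_I}(Q)`: the convex hull in `C_I` of `V(Q) ∩ C_I` if the restriction of `Q`
to `C_I` is nonconstant, and `C_I` itself otherwise. -/
def KC (I : Hq) (Q : Hq[X]) : Set Hq :=
  if ∃ c, ∀ x ∈ Cplane I, evalQ Q x = c then Cplane I
  else convexHull ℝ (VQ Q ∩ Cplane I)

/-- The Gauss-Lucas snail `sn(P) = ⋃_{I ∈ S} K_{C_I}(P^I)`. -/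
def snail (P : Hq[X]) : Set Hq := ⋃ I ∈ sphereS, KC I (projPoly I P)

/-- The Cauchy bound `C(P) = |a_d|⁻¹ √(∑ |a_k|²)`. -/
def CQ (P : Hq[X]) : ℝ :=
  ‖P.leadingCoeff‖⁻¹ * Real.sqrt (∑ k ∈ Finset.range (P.natDegree + 1), ‖P.coeff k‖ ^ 2)

/-- Extended Cauchy bound, `+∞` on constant polynomials. -/
def CExt (P : Hq[X]) : ℝ≥0∞ :=
  if P.natDegree = 0 then ⊤ else ENNReal.ofReal (CQ P)

def qi : Hq := ⟨0, 1, 0, 0⟩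
def qj : Hq := ⟨0, 0, 1, 0⟩
def qk : Hq := ⟨0, 0, 0, 1⟩

/-- Polynomial with coefficient tuple `a`. -/
def polyOf {n : ℕ} (a : Fin (n + 1) → Hq) : Hq[X] :=
  ∑ k : Fin (n + 1), C (a k) * X ^ (k : ℕ)

namespace GL14

open Metric Set

/-! ### Basic facts about imaginary units -/

lemma sphere_re {I : Hq} (h : I ∈ sphereS) : I.re = 0 := by
  have h' : I * I = -1 := by rw [← sq]; exact h
  have h1 : I.re * I.re - I.imI * I.imI - I.imJ * I.imJ - I.imK * I.imK = -1 := by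
    rw [← Quaternion.re_mul, h']; simp [Quaternion.re_one]
  have h2 : I.re * I.imI + I.imI * I.re + I.imJ * I.imK - I.imK * I.imJ = 0 := by
    rw [← Quaternion.imI_mul, h']; simp [Quaternion.imI_one]
  have h3 : I.re * I.imJ - I.imI * I.imK + I.imJ * I.re + I.imK * I.imI = 0 := by
    rw [← Quaternion.imJ_mul, h']; simp [Quaternion.imJ_one]
  have h4 : I.re * I.imK + I.imI * I.imJ - I.imJ * I.imI + I.imK * I.re = 0 := by
    rw [← Quaternion.imK_mul, h']; simp [Quaternion.imK_one]
  by_contra hre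
  have hI : I.imI = 0 := by
    have : I.re * I.imI = 0 := by linarith
    rcases mul_eq_zero.1 this with h | h; · exact absurd h hre
    · exact h
  have hJ : I.imJ = 0 := by
    have : I.re * I.imJ = 0 := by linarith
    rcases mul_eq_zero.1 this with h | h; · exact absurd h hre
    · exact h
  have hK : I.imK = 0 := by
    have : I.re * I.imK = 0 := by linarith
    rcases mul_eq_zero.1 this with h | h; · exact absurd h hre
    · exact h
  rw [hI, hJ, hK] at h1
  nlinarith [sq_nonneg I.re]

lemma sphere_normSq {I : Hq} (h : I ∈ sphereS) : Quaternion.normSq I = 1 := by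
  have h' : I * I = -1 := by rw [← sq]; exact h
  have h1 : I.re * I.re - I.imI * I.imI - I.imJ * I.imJ - I.imK * I.imK = -1 := by
    rw [← Quaternion.re_mul, h']; simp [Quaternion.re_one]
  have hre := sphere_re h
  rw [Quaternion.normSq_def']
  nlinarith

lemma sphere_norm {I : Hq} (h : I ∈ sphereS) : ‖I‖ = 1 := by
  have h1 : ‖I‖ * ‖I‖ = 1 := by
    rw [← Quaternion.normSq_eq_norm_mul_self, sphere_normSq h]
  nlinarith [norm_nonneg I]

lemma sphere_ne_zero {I : Hq} (h : I ∈ sphereS) : I ≠ 0 := by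
  intro h0
  have := sphere_norm h
  rw [h0, norm_zero] at this
  norm_num at this

/-! ### The embedding `φ_I : ℂ → ℍ` -/

/-- The real-linear embedding of `ℂ` into `ℍ` sending `i` to `I`. -/
def phiL (I : Hq) : ℂ →ₗ[ℝ] Hq where
  toFun z := z.re • (1 : Hq) + z.im • I
  map_add' z w := by
    simp only [Complex.add_re, Complex.add_im, add_smul]
    abel
  map_smul' r z := by
    simp only [Complex.smul_re, Complex.smul_im, RingHom.id_apply, smul_add, smul_smul,
      smul_eq_mul]

lemma phiL_apply (I : Hq) (z : ℂ) : phiL I z = z.re • (1 : Hq) + z.im • I := rfl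

lemma phiL_one (I : Hq) : phiL I 1 = 1 := by
  simp [phiL_apply]

lemma phiL_mul {I : Hq} (h : I ∈ sphereS) (z w : ℂ) :
    phiL I (z * w) = phiL I z * phiL I w := by
  have hI : I * I = -1 := by rw [← sq]; exact h
  simp only [phiL_apply, Complex.mul_re, Complex.mul_im, add_mul, mul_add,
    smul_mul_assoc, mul_smul_comm, one_mul, mul_one, smul_smul, hI, smul_neg, sub_smul]
  module

lemma phiL_re {I : Hq} (h : I ∈ sphereS) (z : ℂ) : (phiL I z).re = z.re := by
  simp [phiL_apply, Quaternion.re_add, Quaternion.re_one, sphere_re h]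

lemma phiL_injective {I : Hq} (h : I ∈ sphereS) : Function.Injective (phiL I) := by
  intro z w hzw
  have hre : z.re = w.re := by rw [← phiL_re h z, hzw, phiL_re h w]
  have h2 : z.im • I = w.im • I := by
    have h1 := hzw
    simp only [phiL_apply, hre] at h1
    exact add_left_cancel h1
  have him : z.im = w.im := by
    have h3 : (z.im - w.im) • I = 0 := by rw [sub_smul, h2, sub_self]
    rcases smul_eq_zero.1 h3 with h0 | h0
    · exact sub_eq_zero.1 h0
    · exact absurd h0 (sphere_ne_zero h)
  exact Complex.ext hre him

lemma phiL_norm_le {I : Hq} (h : I ∈ sphereS) (z : ℂ) : ‖phiL I z‖ ≤ 2 * ‖z‖ := by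
  calc ‖phiL I z‖ ≤ ‖z.re • (1 : Hq)‖ + ‖z.im • I‖ := norm_add_le _ _
    _ = |z.re| * 1 + |z.im| * ‖I‖ := by
        rw [norm_smul, norm_smul, norm_one, Real.norm_eq_abs, Real.norm_eq_abs]
    _ ≤ ‖z‖ + ‖z‖ := by
        rw [sphere_norm h, mul_one, mul_one]
        exact add_le_add (Complex.abs_re_le_norm z) (Complex.abs_im_le_norm z)
    _ = 2 * ‖z‖ := by ring

/-! ### Powers and sums under `φ` -/

lemma phiL_pow {I : Hq} (h : I ∈ sphereS) (z : ℂ) (k : ℕ) :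
    phiL I (z ^ k) = phiL I z ^ k := by
  induction k with
  | zero => simpa using phiL_one I
  | succ n ih => rw [pow_succ, pow_succ, phiL_mul h, ih]

/-! ### Root bounds for complex polynomials -/

lemma pow_card_le_prod (s : Multiset ℝ) {m : ℝ} (hm : 0 ≤ m) (h : ∀ x ∈ s, m ≤ x) :
    m ^ Multiset.card s ≤ s.prod := by
  induction s using Multiset.induction_on with
  | empty => simp
  | cons a s ih =>
    simp only [Multiset.card_cons, Multiset.prod_cons, pow_succ']
    exact mul_le_mul (h a (Multiset.mem_cons_self a s))
      (ih fun x hx => h x (Multiset.mem_cons_of_mem hx))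
      (pow_nonneg hm _) (hm.trans (h a (Multiset.mem_cons_self a s)))

/-- Zero set of a complex polynomial. -/
def Vc (p : ℂ[X]) : Set ℂ := {z | p.eval z = 0}

lemma Vc_finite {p : ℂ[X]} (hp : p ≠ 0) : (Vc p).Finite :=
  Polynomial.finite_setOf_isRoot hp

lemma Vc_nonempty {p : ℂ[X]} (hd : 0 < p.natDegree) : (Vc p).Nonempty := by
  obtain ⟨z, hz⟩ := Complex.exists_root (Polynomial.natDegree_pos_iff_degree_pos.1 hd)
  exact ⟨z, hz⟩

lemma norm_multiset_prod' (s : Multiset ℂ) : ‖s.prod‖ = (s.map norm).prod := by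
  induction s using Multiset.induction_on with
  | empty => simp
  | cons a s ih => simp [norm_mul, ih]

lemma infDist_pow_le {p : ℂ[X]} (hp : p.Monic) (z : ℂ) :
    infDist z (Vc p) ^ p.natDegree ≤ ‖p.eval z‖ := by
  have hsplit : p = (p.roots.map fun a => X - C a).prod :=
    (IsAlgClosed.splits p).eq_prod_roots_of_monic hp
  have hcard : Multiset.card p.roots = p.natDegree :=
    Polynomial.splits_iff_card_roots.1 (IsAlgClosed.splits p)
  conv_rhs => rw [hsplit]
  rw [Polynomial.eval_multiset_prod, Multiset.map_map]
  have hmap : (p.roots.map (Polynomial.eval z ∘ fun a => X - C a)) =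
      p.roots.map fun a => z - a := by
    apply Multiset.map_congr rfl
    intro a _
    simp
  rw [hmap]
  rw [norm_multiset_prod', Multiset.map_map]
  have hb : ∀ x ∈ p.roots.map (norm ∘ fun a => z - a), infDist z (Vc p) ≤ x := by
    intro x hx
    obtain ⟨a, ha, rfl⟩ := Multiset.mem_map.1 hx
    have haV : a ∈ Vc p := (Polynomial.mem_roots'.1 ha).2
    calc infDist z (Vc p) ≤ dist z a := infDist_le_dist_of_mem haV
      _ = ‖z - a‖ := dist_eq_norm z a
  have := pow_card_le_prod _ infDist_nonneg hb
  rwa [Multiset.card_map, hcard] at this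

lemma root_norm_le {p : ℂ[X]} (hp : p.Monic) {z : ℂ} (hz : p.eval z = 0) :
    ‖z‖ ≤ max 1 (∑ k ∈ Finset.range p.natDegree, ‖p.coeff k‖) := by
  by_contra hgt
  push_neg at hgt
  rw [max_lt_iff] at hgt
  obtain ⟨h1, hS⟩ := hgt
  have hd0 : 0 < p.natDegree := by
    rcases Nat.eq_zero_or_pos p.natDegree with h0 | h0
    · exfalso
      have : p = 1 := hp.natDegree_eq_zero.1 h0
      rw [this] at hz
      simp at hz
    · exact h0
  set d := p.natDegree with hd
  have heval : p.eval z = ∑ i ∈ Finset.range (d + 1), p.coeff i * z ^ i :=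
    Polynomial.eval_eq_sum_range z
  rw [Finset.sum_range_succ, hp.coeff_natDegree, one_mul] at heval
  have hzd : z ^ d = -∑ i ∈ Finset.range d, p.coeff i * z ^ i := by
    rw [hz] at heval
    linear_combination -heval
  have hnorm : ‖z‖ ^ d ≤ (∑ k ∈ Finset.range d, ‖p.coeff k‖) * ‖z‖ ^ (d - 1) := by
    calc ‖z‖ ^ d = ‖z ^ d‖ := (norm_pow z d).symm
      _ = ‖∑ i ∈ Finset.range d, p.coeff i * z ^ i‖ := by rw [hzd, norm_neg]
      _ ≤ ∑ i ∈ Finset.range d, ‖p.coeff i * z ^ i‖ := norm_sum_le _ _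
      _ ≤ ∑ i ∈ Finset.range d, ‖p.coeff i‖ * ‖z‖ ^ (d - 1) := by
          apply Finset.sum_le_sum
          intro i hi
          have hid : i ≤ d - 1 := by
            have := Finset.mem_range.1 hi
            omega
          rw [norm_mul, norm_pow]
          exact mul_le_mul_of_nonneg_left
            (pow_le_pow_right₀ h1.le hid) (norm_nonneg _)
      _ = (∑ k ∈ Finset.range d, ‖p.coeff k‖) * ‖z‖ ^ (d - 1) := by
          rw [Finset.sum_mul]
  have hzpos : (0:ℝ) < ‖z‖ ^ (d - 1) := pow_pos (lt_trans one_pos h1) _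
  have hlt : (∑ k ∈ Finset.range d, ‖p.coeff k‖) * ‖z‖ ^ (d - 1) < ‖z‖ * ‖z‖ ^ (d - 1) :=
    mul_lt_mul_of_pos_right hS hzpos
  have hpow : ‖z‖ * ‖z‖ ^ (d - 1) = ‖z‖ ^ d := by
    rw [← pow_succ']
    congr 1
    omega
  rw [hpow] at hlt
  exact absurd (lt_of_le_of_lt hnorm hlt) (lt_irrefl _)

/-! ### Convexity of the distance function -/

lemma convexOn_infDist {E : Type*} [NormedAddCommGroup E] [NormedSpace ℝ E] {t : Set E}
    (hne : t.Nonempty) (ht : Convex ℝ t) : ConvexOn ℝ Set.univ fun x => infDist x t := by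
  refine ⟨convex_univ, fun x _ y _ a b ha hb hab => ?_⟩
  refine le_of_forall_pos_le_add fun ε hε => ?_
  obtain ⟨u, hu, hxu⟩ := (infDist_lt_iff hne).1
    (lt_add_of_pos_right (infDist x t) (half_pos hε))
  obtain ⟨v, hv, hyv⟩ := (infDist_lt_iff hne).1
    (lt_add_of_pos_right (infDist y t) (half_pos hε))
  have hmem : a • u + b • v ∈ t := ht hu hv ha hb hab
  calc infDist (a • x + b • y) t ≤ dist (a • x + b • y) (a • u + b • v) :=
        infDist_le_dist_of_mem hmem
    _ ≤ a * dist x u + b * dist y v := by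
        rw [dist_eq_norm, dist_eq_norm, dist_eq_norm]
        calc ‖a • x + b • y - (a • u + b • v)‖ = ‖a • (x - u) + b • (y - v)‖ := by
              rw [smul_sub, smul_sub]; congr 1; abel
          _ ≤ ‖a • (x - u)‖ + ‖b • (y - v)‖ := norm_add_le _ _
          _ = a * ‖x - u‖ + b * ‖y - v‖ := by
              rw [norm_smul, norm_smul, Real.norm_eq_abs, Real.norm_eq_abs,
                abs_of_nonneg ha, abs_of_nonneg hb]
    _ ≤ a * (infDist x t + ε / 2) + b * (infDist y t + ε / 2) :=
        add_le_add (mul_le_mul_of_nonneg_left hxu.le ha)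
          (mul_le_mul_of_nonneg_left hyv.le hb)
    _ = a * infDist x t + b * infDist y t + (a + b) * (ε / 2) := by ring
    _ ≤ a * infDist x t + b * infDist y t + ε := by rw [hab]; linarith

lemma infDist_convexHull_le {E : Type*} [NormedAddCommGroup E] [NormedSpace ℝ E] {s t : Set E}
    (hne : t.Nonempty) {r : ℝ} (h : ∀ x ∈ s, infDist x t ≤ r) {x : E}
    (hx : x ∈ convexHull ℝ s) : infDist x (convexHull ℝ t) ≤ r := by
  obtain ⟨y, hy, hle⟩ :=
    (convexOn_infDist (hne.mono (subset_convexHull ℝ t))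
      (convex_convexHull ℝ t)).exists_ge_of_mem_convexHull (Set.subset_univ s) hx
  exact hle.trans ((infDist_le_infDist_of_subset (subset_convexHull ℝ t) hne).trans (h y hy))

/-! ### The complexified polynomial -/

/-- Complex coordinates of the projection of `a` onto `C_I`. -/
def cc (I a : Hq) : ℂ := ⟨@inner ℝ Hq _ a (1 : Hq), @inner ℝ Hq _ a I⟩

lemma phiL_cc (I a : Hq) : phiL I (cc I a) = piProj I a := rfl

lemma cc_one {I : Hq} (h : I ∈ sphereS) : cc I 1 = 1 := by
  have h1 : ⟪(1 : Hq), (1 : Hq)⟫ = 1 := by rw [Quaternion.inner_def]; simp [Quaternion.re_one]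
  have h2 : ⟪(1 : Hq), I⟫ = 0 := by rw [Quaternion.inner_def]; simp [sphere_re h]
  simp [cc, Complex.ext_iff, h1, h2]

lemma cc_norm_le {I : Hq} (h : I ∈ sphereS) (a : Hq) : ‖cc I a‖ ≤ 2 * ‖a‖ := by
  have hre : |(cc I a).re| ≤ ‖a‖ := by
    have := abs_real_inner_le_norm a (1 : Hq)
    simpa [cc] using this
  have him : |(cc I a).im| ≤ ‖a‖ := by
    have := abs_real_inner_le_norm a I
    simpa [cc, sphere_norm h] using this
  calc ‖cc I a‖ ≤ |(cc I a).re| + |(cc I a).im| := by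
        exact Complex.norm_le_abs_re_add_abs_im _
    _ ≤ 2 * ‖a‖ := by linarith

lemma cc_sub_norm {I J : Hq} (a : Hq) : ‖cc I a - cc J a‖ ≤ ‖a‖ * ‖I - J‖ := by
  have hz : cc I a - cc J a = ((@inner ℝ Hq _ a (I - J) : ℝ) : ℂ) * Complex.I := by
    apply Complex.ext <;> simp [cc, inner_sub_right]
  rw [hz, norm_mul, Complex.norm_I, mul_one, Complex.norm_real, Real.norm_eq_abs]
  calc |(@inner ℝ Hq _ a (I - J) : ℝ)| ≤ ‖a‖ * ‖I - J‖ := abs_real_inner_le_norm a (I - J)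

/-- The complex polynomial corresponding to `P^I` under `φ_I`. -/
def cpoly (P : Hq[X]) (I : Hq) : ℂ[X] :=
  ∑ k ∈ Finset.range (P.natDegree + 1), C (cc I (P.coeff k)) * X ^ k

lemma cpoly_coeff (P : Hq[X]) (I : Hq) (n : ℕ) :
    (cpoly P I).coeff n =
      if n ∈ Finset.range (P.natDegree + 1) then cc I (P.coeff n) else 0 := by
  rw [cpoly, Polynomial.finset_sum_coeff]
  simp only [Polynomial.coeff_C_mul, Polynomial.coeff_X_pow, mul_ite, mul_one, mul_zero]
  exact Finset.sum_ite_eq (Finset.range (P.natDegree + 1)) n fun k => cc I (P.coeff k)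

lemma cpoly_coeff_le (P : Hq[X]) {I : Hq} (h : I ∈ sphereS) (n : ℕ) :
    ‖(cpoly P I).coeff n‖ ≤ 2 * ‖P.coeff n‖ := by
  rw [cpoly_coeff]
  split
  · exact cc_norm_le h _
  · rw [norm_zero]
    positivity

lemma cpoly_natDegree {P : Hq[X]} (hP : P.Monic) {I : Hq} (h : I ∈ sphereS) :
    (cpoly P I).natDegree = P.natDegree := by
  have hcd : (cpoly P I).coeff P.natDegree = 1 := by
    rw [cpoly_coeff, if_pos (Finset.self_mem_range_succ _)]
    rw [show P.coeff P.natDegree = 1 from hP.coeff_natDegree, cc_one h]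
  apply le_antisymm
  · rw [Polynomial.natDegree_le_iff_coeff_eq_zero]
    intro m hmlt
    rw [cpoly_coeff, if_neg]
    simp only [Finset.mem_range, not_lt]
    omega
  · exact Polynomial.le_natDegree_of_ne_zero (by rw [hcd]; exact one_ne_zero)

lemma cpoly_monic {P : Hq[X]} (hP : P.Monic) {I : Hq} (h : I ∈ sphereS) :
    (cpoly P I).Monic := by
  unfold Polynomial.Monic Polynomial.leadingCoeff
  rw [cpoly_natDegree hP h, cpoly_coeff, if_pos (Finset.self_mem_range_succ _),
    show P.coeff P.natDegree = 1 from hP.coeff_natDegree, cc_one h]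

lemma cpoly_eval (P : Hq[X]) (I : Hq) (z : ℂ) :
    (cpoly P I).eval z =
      ∑ k ∈ Finset.range (P.natDegree + 1), cc I (P.coeff k) * z ^ k := by
  rw [cpoly, Polynomial.eval_finset_sum]
  simp

/-! ### Evaluation of the projected polynomial -/

/-- Right evaluation as an additive monoid hom. -/
def evalQHom (x : Hq) : Hq[X] →+ Hq where
  toFun P := evalQ P x
  map_zero' := by simp [evalQ]
  map_add' P Q :=
    Polynomial.sum_add_index P Q _ (fun k => mul_zero _) fun k a b => mul_add _ _ _

lemma evalQ_C_mul_X_pow (x b : Hq) (k : ℕ) : evalQ (C b * X ^ k) x = x ^ k * b := by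
  rw [Polynomial.C_mul_X_pow_eq_monomial]
  unfold evalQ
  exact Polynomial.sum_monomial_index b _ (mul_zero _)

lemma projPoly_eq (I : Hq) (P : Hq[X]) :
    projPoly I P =
      ∑ k ∈ Finset.range (P.natDegree + 1), C (piProj I (P.coeff k)) * X ^ k := by
  unfold projPoly
  apply Polynomial.sum_over_range
  intro n
  have h0 : piProj I 0 = 0 := by simp [piProj]
  rw [h0, map_zero, zero_mul]

lemma evalQ_projPoly {P : Hq[X]} {I : Hq} (h : I ∈ sphereS) (z : ℂ) :
    evalQ (projPoly I P) (phiL I z) = phiL I ((cpoly P I).eval z) := by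
  rw [projPoly_eq]
  have hsum : evalQ (∑ k ∈ Finset.range (P.natDegree + 1),
      C (piProj I (P.coeff k)) * X ^ k) (phiL I z) =
      ∑ k ∈ Finset.range (P.natDegree + 1), phiL I z ^ k * piProj I (P.coeff k) := by
    rw [show evalQ (∑ k ∈ Finset.range (P.natDegree + 1),
      C (piProj I (P.coeff k)) * X ^ k) (phiL I z) =
      evalQHom (phiL I z) (∑ k ∈ Finset.range (P.natDegree + 1),
        C (piProj I (P.coeff k)) * X ^ k) from rfl, map_sum]
    exact Finset.sum_congr rfl fun k _ => evalQ_C_mul_X_pow _ _ _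
  rw [hsum, cpoly_eval, map_sum]
  apply Finset.sum_congr rfl
  intro k _
  rw [mul_comm (cc I (P.coeff k)) (z ^ k), phiL_mul h, phiL_pow h, phiL_cc]

/-! ### Transfer of membership and the `KC` set -/

lemma mem_Cplane_iff {I x : Hq} : x ∈ Cplane I ↔ ∃ z : ℂ, x = phiL I z := by
  constructor
  · rintro ⟨a, b, rfl⟩
    exact ⟨⟨a, b⟩, by simp [phiL_apply, Algebra.algebraMap_eq_smul_one]⟩
  · rintro ⟨z, rfl⟩
    exact ⟨z.re, z.im, by simp [phiL_apply, Algebra.algebraMap_eq_smul_one]⟩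

lemma VQ_inter_Cplane (P : Hq[X]) {I : Hq} (h : I ∈ sphereS) :
    VQ (projPoly I P) ∩ Cplane I = phiL I '' Vc (cpoly P I) := by
  ext x
  constructor
  · rintro ⟨hx0, hxC⟩
    obtain ⟨z, rfl⟩ := mem_Cplane_iff.1 hxC
    refine ⟨z, ?_, rfl⟩
    have h0 : phiL I ((cpoly P I).eval z) = phiL I 0 := by
      rw [← evalQ_projPoly h, map_zero]
      exact hx0
    exact phiL_injective h h0
  · rintro ⟨z, hz, rfl⟩
    refine ⟨?_, mem_Cplane_iff.2 ⟨z, rfl⟩⟩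
    show evalQ _ _ = 0
    rw [evalQ_projPoly h, show (cpoly P I).eval z = 0 from hz, map_zero]

lemma phiL_continuous (I : Hq) : Continuous (phiL I) := by
  show Continuous fun z : ℂ => z.re • (1 : Hq) + z.im • I
  exact (Complex.continuous_re.smul continuous_const).add
    (Complex.continuous_im.smul continuous_const)

lemma KC_eq {P : Hq[X]} (hP : P.Monic) (hd : 0 < P.natDegree) {I : Hq} (h : I ∈ sphereS) :
    KC I (projPoly I P) = phiL I '' convexHull ℝ (Vc (cpoly P I)) := by
  have hd' : 0 < (cpoly P I).natDegree := by rw [cpoly_natDegree hP h]; exact hd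
  have hncK : ¬∃ c, ∀ x ∈ Cplane I, evalQ (projPoly I P) x = c := by
    rintro ⟨c, hc⟩
    obtain ⟨z₁, hz₁⟩ := Vc_nonempty hd'
    have hd2 : 0 < (cpoly P I - C 1).natDegree := by
      rw [Polynomial.natDegree_sub_C]; exact hd'
    obtain ⟨z₂, hz₂⟩ := Vc_nonempty hd2
    have hz₂' : (cpoly P I).eval z₂ = 1 := by
      have h2 : (cpoly P I - C 1).eval z₂ = 0 := hz₂
      rw [Polynomial.eval_sub, Polynomial.eval_C, sub_eq_zero] at h2
      exact h2
    have e₁ : c = 0 := by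
      rw [← hc (phiL I z₁) (mem_Cplane_iff.2 ⟨z₁, rfl⟩), evalQ_projPoly h,
        show (cpoly P I).eval z₁ = 0 from hz₁, map_zero]
    have e₂ : c = 1 := by
      rw [← hc (phiL I z₂) (mem_Cplane_iff.2 ⟨z₂, rfl⟩), evalQ_projPoly h, hz₂', phiL_one]
    rw [e₁] at e₂
    exact zero_ne_one e₂
  rw [KC, if_neg hncK, VQ_inter_Cplane P h, ← LinearMap.image_convexHull]

lemma convexHull_norm_le {E : Type*} [NormedAddCommGroup E] [NormedSpace ℝ E] {s : Set E}
    {R : ℝ} (h : ∀ x ∈ s, ‖x‖ ≤ R) {x : E} (hx : x ∈ convexHull ℝ s) : ‖x‖ ≤ R := by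
  have hsub : s ⊆ closedBall 0 R := fun y hy => by
    rw [mem_closedBall, dist_zero_right]; exact h y hy
  have := convexHull_min hsub (convex_closedBall (0 : E) R) hx
  rwa [mem_closedBall, dist_zero_right] at this

end GL14

theorem stmt14 (P : Hq[X]) (hm : P.Monic) (hnc : 0 < P.natDegree) :
    ∃ f : sphereS → TopologicalSpace.NonemptyCompacts Hq,
      (∀ I : sphereS, (f I : Set Hq) = KC (I : Hq) (projPoly (I : Hq) P)) ∧
      Continuous f := by
  have hmono : ∀ I : Hq, I ∈ sphereS → (GL14.cpoly P I).Monic :=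
    fun I h => GL14.cpoly_monic hm h
  have hdeg : ∀ I : Hq, I ∈ sphereS → (GL14.cpoly P I).natDegree = P.natDegree :=
    fun I h => GL14.cpoly_natDegree hm h
  -- uniform bound on roots
  set R : ℝ := 1 + ∑ k ∈ Finset.range P.natDegree, 2 * ‖P.coeff k‖ with hRdef
  have hsum0 : (0:ℝ) ≤ ∑ k ∈ Finset.range P.natDegree, 2 * ‖P.coeff k‖ :=
    Finset.sum_nonneg fun k _ => by positivity
  have hR1 : (1:ℝ) ≤ R := by rw [hRdef]; linarith
  have hR0 : (0:ℝ) < R := lt_of_lt_of_le one_pos hR1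
  have hroot : ∀ I : Hq, I ∈ sphereS → ∀ z ∈ GL14.Vc (GL14.cpoly P I), ‖z‖ ≤ R := by
    intro I hI z hz
    refine (GL14.root_norm_le (hmono I hI) hz).trans ?_
    refine max_le hR1 ?_
    have hS' : ∑ k ∈ Finset.range (GL14.cpoly P I).natDegree, ‖(GL14.cpoly P I).coeff k‖ ≤
        ∑ k ∈ Finset.range P.natDegree, 2 * ‖P.coeff k‖ := by
      rw [hdeg I hI]
      exact Finset.sum_le_sum fun k _ => GL14.cpoly_coeff_le P hI k
    rw [hRdef]; linarith
  have hKbd : ∀ I : Hq, I ∈ sphereS →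
      ∀ x ∈ convexHull ℝ (GL14.Vc (GL14.cpoly P I)), ‖x‖ ≤ R :=
    fun I hI x hx => GL14.convexHull_norm_le (hroot I hI) hx
  -- uniform Lipschitz bound for evaluation in `I`
  set M : ℝ := ∑ k ∈ Finset.range (P.natDegree + 1), ‖P.coeff k‖ * R ^ k with hMdef
  have hM0 : (0:ℝ) ≤ M := Finset.sum_nonneg fun k _ => by positivity
  have hevaldiff : ∀ I J : Hq, ∀ z : ℂ, ‖z‖ ≤ R →
      ‖(GL14.cpoly P I).eval z - (GL14.cpoly P J).eval z‖ ≤ M * ‖I - J‖ := by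
    intro I J z hzR
    rw [GL14.cpoly_eval, GL14.cpoly_eval, ← Finset.sum_sub_distrib]
    calc ‖∑ k ∈ Finset.range (P.natDegree + 1),
          (GL14.cc I (P.coeff k) * z ^ k - GL14.cc J (P.coeff k) * z ^ k)‖
        ≤ ∑ k ∈ Finset.range (P.natDegree + 1),
          ‖GL14.cc I (P.coeff k) * z ^ k - GL14.cc J (P.coeff k) * z ^ k‖ :=
        norm_sum_le _ _
      _ ≤ ∑ k ∈ Finset.range (P.natDegree + 1), ‖P.coeff k‖ * R ^ k * ‖I - J‖ := by
          apply Finset.sum_le_sum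
          intro k _
          rw [← sub_mul, norm_mul, norm_pow]
          calc ‖GL14.cc I (P.coeff k) - GL14.cc J (P.coeff k)‖ * ‖z‖ ^ k
              ≤ ‖P.coeff k‖ * ‖I - J‖ * R ^ k := by
                apply mul_le_mul (GL14.cc_sub_norm _)
                  (pow_le_pow_left₀ (norm_nonneg z) hzR k) (by positivity) (by positivity)
            _ = ‖P.coeff k‖ * R ^ k * ‖I - J‖ := by ring
      _ = M * ‖I - J‖ := by rw [hMdef, Finset.sum_mul]
  -- the data
  have hVfin : ∀ I : sphereS, (GL14.Vc (GL14.cpoly P (I : Hq))).Finite :=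
    fun I => GL14.Vc_finite (hmono _ I.2).ne_zero
  have hVne : ∀ I : sphereS, (GL14.Vc (GL14.cpoly P (I : Hq))).Nonempty :=
    fun I => GL14.Vc_nonempty (by rw [hdeg _ I.2]; exact hnc)
  refine ⟨fun I =>
    ⟨⟨GL14.phiL (I : Hq) '' convexHull ℝ (GL14.Vc (GL14.cpoly P (I : Hq))),
      ((hVfin I).isCompact_convexHull ℝ).image (GL14.phiL_continuous _)⟩,
      ((convexHull_nonempty_iff.2 (hVne I)).image _)⟩,
    fun I => (GL14.KC_eq hm hnc I.2).symm, ?_⟩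
  -- continuity
  rw [Metric.continuous_iff]
  intro I₀ ε hε
  set ε' : ℝ := ε / 4 with hε'def
  have hε' : 0 < ε' := by rw [hε'def]; linarith
  set δ : ℝ := min (ε' ^ P.natDegree / (M + 1)) (ε' / (R + 1)) with hδdef
  have hδ0 : 0 < δ := lt_min (by positivity) (by positivity)
  refine ⟨δ, hδ0, fun I hI => ?_⟩
  have hIJ : ‖(I : Hq) - (I₀ : Hq)‖ < δ := by
    rw [← dist_eq_norm]
    rw [Subtype.dist_eq] at hI
    exact hI
  -- the key one-sided estimate
  have key : ∀ J K : sphereS, ‖(J : Hq) - (K : Hq)‖ ≤ δ →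
      ∀ x ∈ GL14.phiL (J : Hq) '' convexHull ℝ (GL14.Vc (GL14.cpoly P (J : Hq))),
      Metric.infDist x
        (GL14.phiL (K : Hq) '' convexHull ℝ (GL14.Vc (GL14.cpoly P (K : Hq)))) ≤ 3 * ε' := by
    intro J K hJK x hx
    obtain ⟨u, hu, rfl⟩ := hx
    have hAA : ∀ z ∈ GL14.Vc (GL14.cpoly P (J : Hq)),
        Metric.infDist z (GL14.Vc (GL14.cpoly P (K : Hq))) ≤ ε' := by
      intro z hz
      have h1 : Metric.infDist z (GL14.Vc (GL14.cpoly P (K : Hq))) ^ P.natDegree ≤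
          ‖(GL14.cpoly P (K : Hq)).eval z‖ := by
        have h := GL14.infDist_pow_le (hmono _ K.2) z
        rwa [hdeg _ K.2] at h
      have h2 : ‖(GL14.cpoly P (K : Hq)).eval z‖ ≤ M * δ := by
        have h3 : (GL14.cpoly P (J : Hq)).eval z = 0 := hz
        have h4 := hevaldiff (K : Hq) (J : Hq) z (hroot _ J.2 z hz)
        rw [h3, sub_zero] at h4
        refine h4.trans ?_
        have h5 : ‖(K : Hq) - (J : Hq)‖ ≤ δ := by rwa [norm_sub_rev]
        exact mul_le_mul_of_nonneg_left h5 hM0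
      have h6 : M * δ ≤ ε' ^ P.natDegree := by
        have h7 : δ ≤ ε' ^ P.natDegree / (M + 1) := min_le_left _ _
        have h8 : M * δ ≤ M * (ε' ^ P.natDegree / (M + 1)) :=
          mul_le_mul_of_nonneg_left h7 hM0
        refine h8.trans ?_
        rw [mul_div_assoc']
        rw [div_le_iff₀ (by linarith : (0:ℝ) < M + 1)]
        have : (0:ℝ) ≤ ε' ^ P.natDegree := by positivity
        nlinarith
      have h9 : Metric.infDist z (GL14.Vc (GL14.cpoly P (K : Hq))) ^ P.natDegree ≤
          ε' ^ P.natDegree := h1.trans (h2.trans h6)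
      exact le_of_pow_le_pow_left₀ (by omega) hε'.le h9
    have hKK : Metric.infDist u (convexHull ℝ (GL14.Vc (GL14.cpoly P (K : Hq)))) ≤ ε' :=
      GL14.infDist_convexHull_le (hVne K) hAA hu
    obtain ⟨v, hv, hdist⟩ := ((hVfin K).isCompact_convexHull ℝ).exists_infDist_eq_dist
      (convexHull_nonempty_iff.2 (hVne K)) u
    have hduv : dist u v ≤ ε' := by rw [← hdist]; exact hKK
    have hvR : ‖v‖ ≤ R := hKbd _ K.2 v hv
    have step : dist (GL14.phiL (J : Hq) u) (GL14.phiL (K : Hq) v) ≤ 3 * ε' := by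
      have t1 : dist (GL14.phiL (J : Hq) u) (GL14.phiL (J : Hq) v) ≤ 2 * dist u v := by
        rw [dist_eq_norm, ← map_sub, dist_eq_norm]
        exact GL14.phiL_norm_le J.2 (u - v)
      have t2 : dist (GL14.phiL (J : Hq) v) (GL14.phiL (K : Hq) v) ≤ R * δ := by
        rw [dist_eq_norm]
        have hsub : GL14.phiL (J : Hq) v - GL14.phiL (K : Hq) v = v.im • ((J : Hq) - (K : Hq)) := by
          simp only [GL14.phiL_apply, smul_sub]
          abel
        rw [hsub, norm_smul, Real.norm_eq_abs]
        have him : |v.im| ≤ R := by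
          have := Complex.abs_im_le_norm v
          exact this.trans hvR
        exact mul_le_mul him hJK (norm_nonneg _) (by linarith)
      have t3 : R * δ ≤ ε' := by
        have h7 : δ ≤ ε' / (R + 1) := min_le_right _ _
        have h8 : R * δ ≤ R * (ε' / (R + 1)) := mul_le_mul_of_nonneg_left h7 hR0.le
        refine h8.trans ?_
        rw [mul_div_assoc']
        rw [div_le_iff₀ (by linarith : (0:ℝ) < R + 1)]
        nlinarith
      calc dist (GL14.phiL (J : Hq) u) (GL14.phiL (K : Hq) v) ≤
          dist (GL14.phiL (J : Hq) u) (GL14.phiL (J : Hq) v) +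
            dist (GL14.phiL (J : Hq) v) (GL14.phiL (K : Hq) v) := dist_triangle _ _ _
        _ ≤ 2 * dist u v + R * δ := add_le_add t1 t2
        _ ≤ 2 * ε' + ε' := by linarith
        _ = 3 * ε' := by ring
    exact le_trans (Metric.infDist_le_dist_of_mem ⟨v, hv, rfl⟩) step
  rw [Metric.NonemptyCompacts.dist_eq]
  refine lt_of_le_of_lt (Metric.hausdorffDist_le_of_infDist
    (by positivity : (0:ℝ) ≤ 3 * ε') (key I I₀ hIJ.le) (key I₀ I (by rw [norm_sub_rev]; exact hIJ.le))) ?_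
  rw [hε'def]
  linarith

end
end

section
/- Let P ∈ ℍ[X] be a monic quaternionic polynomial of degree ≥ 2. Then the Gauss-Lucas snail sn(P) is a closed subset of ℍ. -/
open Polynomial
open scoped Classical RealInnerProductSpace ENNReal

noncomputable section

section Lemmas

lemma sphereS_re {I : Hq} (hI : I ∈ sphereS) : I.re = 0 := by
  have h2 : I * I = -1 := by have := hI; rwa [sphereS, Set.mem_setOf_eq, sq] at this
  have e1 : I.re * I.re - I.imI * I.imI - I.imJ * I.imJ - I.imK * I.imK = -1 := by
    have := congrArg QuaternionAlgebra.re h2; simpa [Quaternion.re_mul, Quaternion.re_one] using this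
  have e2 : I.re * I.imI = 0 := by
    have := congrArg QuaternionAlgebra.imI h2; simp [Quaternion.imI_mul, Quaternion.imI_one] at this; linarith
  have e3 : I.re * I.imJ = 0 := by
    have := congrArg QuaternionAlgebra.imJ h2; simp [Quaternion.imJ_mul, Quaternion.imJ_one] at this; linarith
  have e4 : I.re * I.imK = 0 := by
    have := congrArg QuaternionAlgebra.imK h2; simp [Quaternion.imK_mul, Quaternion.imK_one] at this; linarith
  nlinarith [sq_nonneg I.re, sq_nonneg (I.re*I.re), mul_self_nonneg I.re,
    mul_eq_zero.mp e2, mul_eq_zero.mp e3, mul_eq_zero.mp e4]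

end Lemmas
section Lemmas2

lemma sphereS_norm {I : Hq} (hI : I ∈ sphereS) : ‖I‖ = 1 := by
  have h2 : I ^ 2 = -1 := hI
  have h : ‖I‖ ^ 2 = 1 := by rw [← norm_pow, h2, norm_neg, norm_one]
  nlinarith [norm_nonneg I]

lemma inner_one_right (a : Hq) : (@inner ℝ Hq _ a (1 : Hq)) = a.re := by
  rw [Quaternion.inner_def]; simp

lemma piProj_one {I : Hq} (hI : I ∈ sphereS) : piProj I (1 : Hq) = 1 := by
  have h1 : (@inner ℝ Hq _ (1:Hq) I) = I.re := by
    rw [real_inner_comm, Quaternion.inner_def]; simp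
  rw [piProj, inner_one_right, h1, sphereS_re hI]
  simp [Quaternion.re_one]

lemma piProj_zero (I : Hq) : piProj I (0 : Hq) = 0 := by
  simp [piProj]

lemma norm_piProj_le {I : Hq} (hI : I ∈ sphereS) (a : Hq) : ‖piProj I a‖ ≤ 2 * ‖a‖ := by
  have h1 : ‖(@inner ℝ Hq _ a (1:Hq)) • (1:Hq)‖ ≤ ‖a‖ := by
    rw [norm_smul, norm_one, mul_one]
    calc |@inner ℝ Hq _ a 1| ≤ ‖a‖ * ‖(1:Hq)‖ := abs_real_inner_le_norm a 1
    _ = ‖a‖ := by rw [norm_one, mul_one]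
  have h2 : ‖(@inner ℝ Hq _ a I) • I‖ ≤ ‖a‖ := by
    rw [norm_smul, sphereS_norm hI, mul_one]
    calc |@inner ℝ Hq _ a I| ≤ ‖a‖ * ‖I‖ := abs_real_inner_le_norm a I
    _ = ‖a‖ := by rw [sphereS_norm hI, mul_one]
  calc ‖piProj I a‖ ≤ ‖(@inner ℝ Hq _ a (1:Hq)) • (1:Hq)‖ + ‖(@inner ℝ Hq _ a I) • I‖ :=
        norm_add_le _ _
  _ ≤ 2 * ‖a‖ := by linarith

lemma continuous_piProj : Continuous (fun p : Hq × Hq => piProj p.1 p.2) := by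
  unfold piProj
  exact ((continuous_snd.inner (𝕜 := ℝ) continuous_const).smul continuous_const).add
    ((continuous_snd.inner (𝕜 := ℝ) continuous_fst).smul continuous_fst)

lemma piProj_mem_Cplane (I x : Hq) : piProj I x ∈ Cplane I := by
  refine ⟨@inner ℝ Hq _ x 1, @inner ℝ Hq _ x I, ?_⟩
  rw [piProj]
  congr 1
  rw [Algebra.algebraMap_eq_smul_one]

lemma mem_Cplane_iff {I : Hq} (hI : I ∈ sphereS) {x : Hq} :
    x ∈ Cplane I ↔ piProj I x = x := by
  constructor
  · rintro ⟨a, b, rfl⟩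
    have hII : (@inner ℝ Hq _ I I) = 1 := by
      rw [real_inner_self_eq_norm_sq, sphereS_norm hI]; norm_num
    have h1I : (@inner ℝ Hq _ (1:Hq) I) = 0 := by
      rw [real_inner_comm, Quaternion.inner_def]; simp [sphereS_re hI]
    have hI1 : (@inner ℝ Hq _ I (1:Hq)) = 0 := by
      rw [inner_one_right, sphereS_re hI]
    rw [piProj]
    rw [inner_add_left, inner_add_left, real_inner_smul_left, real_inner_smul_left,
      Algebra.algebraMap_eq_smul_one, real_inner_smul_left, real_inner_smul_left,
      inner_one_right, hII, h1I, hI1]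
    simp [Quaternion.re_one]
  · intro h; rw [← h]; exact piProj_mem_Cplane I x

end Lemmas2
section PolyLemmas

lemma coeff_projPoly (I : Hq) (P : Hq[X]) (n : ℕ) :
    (projPoly I P).coeff n = piProj I (P.coeff n) := by
  unfold projPoly
  rw [Polynomial.sum, Polynomial.finset_sum_coeff]
  simp only [Polynomial.coeff_C_mul, Polynomial.coeff_X_pow, mul_ite, mul_one, mul_zero]
  rw [Finset.sum_ite_eq P.support n (fun k => piProj I (P.coeff k))]
  split_ifs with h
  · rfl
  · rw [Polynomial.notMem_support_iff.mp h, piProj_zero]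

lemma natDegree_projPoly_le (I : Hq) (P : Hq[X]) :
    (projPoly I P).natDegree ≤ P.natDegree := by
  rw [Polynomial.natDegree_le_iff_coeff_eq_zero]
  intro N hN
  rw [coeff_projPoly, Polynomial.coeff_eq_zero_of_natDegree_lt hN, piProj_zero]

lemma evalQ_projPoly (I : Hq) (P : Hq[X]) (x : Hq) :
    evalQ (projPoly I P) x
      = ∑ k ∈ Finset.range (P.natDegree + 1), x ^ k * piProj I (P.coeff k) := by
  rw [evalQ, Polynomial.sum_over_range' _ (fun n => mul_zero _) (P.natDegree + 1)
    (Nat.lt_succ_of_le (natDegree_projPoly_le I P))]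
  exact Finset.sum_congr rfl fun k _ => by rw [coeff_projPoly]

end PolyLemmas
section NonConst

lemma projPoly_nonconst {I : Hq} (hI : I ∈ sphereS) {P : Hq[X]} (hm : P.Monic)
    (hdeg : 2 ≤ P.natDegree) :
    ¬ ∃ c, ∀ x ∈ Cplane I, evalQ (projPoly I P) x = c := by
  rintro ⟨c, hc⟩
  set d := P.natDegree with hd
  set p : ℝ[X] := ∑ k ∈ Finset.range (d + 1),
    Polynomial.C ((piProj I (P.coeff k)).re) * Polynomial.X ^ k with hp
  have hpc : ∀ n, p.coeff n =
      if n ∈ Finset.range (d+1) then (piProj I (P.coeff n)).re else 0 := by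
    intro n
    rw [hp, Polynomial.finset_sum_coeff]
    simp only [Polynomial.coeff_C_mul, Polynomial.coeff_X_pow, mul_ite, mul_one, mul_zero]
    rw [Finset.sum_ite_eq (Finset.range (d+1)) n (fun k => (piProj I (P.coeff k)).re)]
  have heval : ∀ t : ℝ, p.eval t = c.re := by
    intro t
    have hmem : (algebraMap ℝ Hq t) ∈ Cplane I := ⟨t, 0, by simp⟩
    have h := hc _ hmem
    have h2 : (evalQ (projPoly I P) (algebraMap ℝ Hq t)).re = c.re := by rw [h]
    rw [evalQ_projPoly] at h2
    rw [hp, Polynomial.eval_finset_sum]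
    simp only [Polynomial.eval_mul, Polynomial.eval_C, Polynomial.eval_pow, Polynomial.eval_X]
    have hres : (∑ k ∈ Finset.range (d + 1), (algebraMap ℝ Hq) t ^ k * piProj I (P.coeff k)).re
        = ∑ k ∈ Finset.range (d + 1), ((algebraMap ℝ Hq) t ^ k * piProj I (P.coeff k)).re :=
      map_sum (QuaternionAlgebra.reₗ (-1 : ℝ) 0 (-1) : Hq →ₗ[ℝ] ℝ) _ _
    rw [← h2, ← hd, hres]
    refine Finset.sum_congr rfl fun k _ => ?_
    rw [← map_pow]
    rw [← Algebra.smul_def]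
    simp [mul_comm]
  have hpeq : p = Polynomial.C c.re := by
    apply Polynomial.funext
    intro t
    rw [heval t, Polynomial.eval_C]
  have h1 : p.coeff d = 1 := by
    rw [hpc d, if_pos (Finset.self_mem_range_succ d), hd, hm.coeff_natDegree, piProj_one hI]
    rfl
  rw [hpeq, Polynomial.coeff_C, if_neg (by omega)] at h1
  exact one_ne_zero h1.symm

end NonConst
section RootBound

lemma root_bound {I : Hq} (hI : I ∈ sphereS) {P : Hq[X]} (hm : P.Monic)
    (hdeg : 2 ≤ P.natDegree) {y : Hq} (hy : evalQ (projPoly I P) y = 0) :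
    ‖y‖ ≤ max 1 (∑ k ∈ Finset.range P.natDegree, 2 * ‖P.coeff k‖) := by
  set d := P.natDegree with hd
  set B := ∑ k ∈ Finset.range d, 2 * ‖P.coeff k‖ with hB
  rw [evalQ_projPoly, ← hd, Finset.sum_range_succ, hm.coeff_natDegree, piProj_one hI,
    mul_one] at hy
  have key : y ^ d = -∑ k ∈ Finset.range d, y ^ k * piProj I (P.coeff k) := by
    rw [eq_neg_iff_add_eq_zero, add_comm]; exact hy
  have hbound : ‖y‖ ^ d ≤ ∑ k ∈ Finset.range d, ‖y‖ ^ k * (2 * ‖P.coeff k‖) := by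
    calc ‖y‖ ^ d = ‖y ^ d‖ := (norm_pow y d).symm
      _ = ‖∑ k ∈ Finset.range d, y ^ k * piProj I (P.coeff k)‖ := by rw [key, norm_neg]
      _ ≤ ∑ k ∈ Finset.range d, ‖y ^ k * piProj I (P.coeff k)‖ := norm_sum_le _ _
      _ ≤ ∑ k ∈ Finset.range d, ‖y‖ ^ k * (2 * ‖P.coeff k‖) := by
          refine Finset.sum_le_sum fun k _ => ?_
          rw [norm_mul, norm_pow]
          exact mul_le_mul_of_nonneg_left (norm_piProj_le hI _) (by positivity)
  rcases le_or_gt ‖y‖ 1 with h1 | h1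
  · exact le_max_of_le_left h1
  · refine le_max_of_le_right ?_
    have hd1 : d - 1 + 1 = d := Nat.succ_pred_eq_of_pos (show 0 < P.natDegree by omega)
    have h2 : ‖y‖ ^ d ≤ ‖y‖ ^ (d - 1) * B := by
      rw [hB, Finset.mul_sum]
      refine hbound.trans (Finset.sum_le_sum fun k hk => ?_)
      rw [Finset.mem_range] at hk
      exact mul_le_mul_of_nonneg_right
        (pow_le_pow_right₀ (le_of_lt h1) (show k ≤ P.natDegree - 1 by omega)) (by positivity)
    have h3 : ‖y‖ ^ (d - 1) * ‖y‖ ≤ ‖y‖ ^ (d - 1) * B := by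
      rwa [← pow_succ, hd1]
    exact le_of_mul_le_mul_left h3 (by positivity)

end RootBound
section Cara

lemma sum_dite_embedding {M : Type*} [AddCommMonoid M] {ι : Type*} [Fintype ι]
    [DecidableEq ι] (ρ : ι ↪ Fin 5) (f : ι → M) :
    (∑ j : Fin 5, if hj : ∃ i, ρ i = j then f hj.choose else 0) = ∑ i, f i := by
  classical
  have h3 : (∑ j : Fin 5, if hj : ∃ i, ρ i = j then f hj.choose else 0)
      = ∑ j ∈ Finset.univ.map ρ, (if hj : ∃ i, ρ i = j then f hj.choose else 0) := by
    refine (Finset.sum_subset (Finset.subset_univ _) fun j _ hj => ?_).symm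
    rw [dif_neg]
    rintro ⟨i, rfl⟩
    exact hj (Finset.mem_map_of_mem ρ (Finset.mem_univ i))
  rw [h3, Finset.sum_map]
  refine Finset.sum_congr rfl fun i _ => ?_
  have hj : ∃ i', ρ i' = ρ i := ⟨i, rfl⟩
  rw [dif_pos hj]
  congr 1
  exact ρ.injective hj.choose_spec

lemma caratheodory5 {s : Set Hq} {x : Hq} (hx : x ∈ convexHull ℝ s) :
    ∃ (w : Fin 5 → ℝ) (z : Fin 5 → Hq), (∀ i, 0 ≤ w i) ∧ (∑ i, w i) = 1 ∧
      (∀ i, z i ∈ s) ∧ (∑ i, w i • z i) = x := by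
  classical
  obtain ⟨ι, hfin, z, w, hzs, hai, hwpos, hw1, hsum⟩ :=
    eq_pos_convex_span_of_mem_convexHull hx
  have hne : Nonempty ι := by
    rcases isEmpty_or_nonempty ι with h | h
    · rw [Finset.univ_eq_empty, Finset.sum_empty] at hw1; exact absurd hw1 zero_ne_one
    · exact h
  have hcard : Fintype.card ι ≤ 5 := by
    have h1 := hai.card_le_finrank_succ
    have h2 : Module.finrank ℝ ↥(vectorSpan ℝ (Set.range z)) ≤ Module.finrank ℝ Hq :=
      Submodule.finrank_le _
    have h4 : Module.finrank ℝ Hq = 4 := Quaternion.finrank_eq_four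
    omega
  obtain ⟨ρ⟩ : Nonempty (ι ↪ Fin 5) :=
    Function.Embedding.nonempty_of_card_le (by simpa using hcard)
  obtain ⟨i0⟩ := hne
  refine ⟨fun j => if hj : ∃ i, ρ i = j then w hj.choose else 0,
    fun j => if hj : ∃ i, ρ i = j then z hj.choose else z i0, ?_, ?_, ?_, ?_⟩
  · intro j; dsimp only; split_ifs with hj
    · exact (hwpos _).le
    · exact le_refl 0
  · rw [sum_dite_embedding ρ w]; exact hw1
  · intro j; dsimp only; split_ifs with hj
    · exact hzs ⟨_, rfl⟩
    · exact hzs ⟨_, rfl⟩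
  · rw [← hsum, ← sum_dite_embedding ρ (fun i => w i • z i)]
    refine Finset.sum_congr rfl fun j _ => ?_
    by_cases hj : ∃ i, ρ i = j
    · simp only [dif_pos hj]
    · simp only [dif_neg hj, zero_smul]

end Cara

set_option maxHeartbeats 1000000 in
theorem stmt15 (P : Hq[X]) (hm : P.Monic) (hdeg : 2 ≤ P.natDegree) :
    IsClosed (snail P) := by
  classical
  set R : ℝ := max 1 (∑ k ∈ Finset.range P.natDegree, 2 * ‖P.coeff k‖) with hR
  set K : Set (Hq × (Fin 5 → ℝ) × (Fin 5 → Hq)) :=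
    {p | p.1 ∈ sphereS ∧ (∀ i, 0 ≤ p.2.1 i) ∧ (∑ i, p.2.1 i) = 1 ∧
      (∀ i, evalQ (projPoly p.1 P) (p.2.2 i) = 0 ∧ piProj p.1 (p.2.2 i) = p.2.2 i)} with hK
  set f : Hq × (Fin 5 → ℝ) × (Fin 5 → Hq) → Hq := fun p => ∑ i, p.2.1 i • p.2.2 i with hf
  have hsnail : snail P = f '' K := by
    ext x
    constructor
    · intro hx
      rw [snail, Set.mem_iUnion₂] at hx
      obtain ⟨I, hI, hxK⟩ := hx
      rw [KC, if_neg (projPoly_nonconst hI hm hdeg)] at hxK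
      obtain ⟨w, z, hw0, hw1, hzs, hsum⟩ := caratheodory5 hxK
      refine ⟨(I, w, z), ⟨hI, hw0, hw1, fun i => ?_⟩, hsum⟩
      obtain ⟨h1, h2⟩ := hzs i
      exact ⟨h1, (mem_Cplane_iff hI).mp h2⟩
    · rintro ⟨⟨I, w, z⟩, ⟨hI, hw0, hw1, hz⟩, rfl⟩
      rw [snail, Set.mem_iUnion₂]
      refine ⟨I, hI, ?_⟩
      rw [KC, if_neg (projPoly_nonconst hI hm hdeg)]
      refine (convex_convexHull ℝ _).sum_mem (fun i _ => hw0 i) hw1 fun i _ => ?_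
      exact subset_convexHull ℝ _ ⟨(hz i).1, (mem_Cplane_iff hI).mpr (hz i).2⟩
  have hcont_pi : ∀ k : ℕ, Continuous fun p : Hq × (Fin 5 → ℝ) × (Fin 5 → Hq) =>
      piProj p.1 (P.coeff k) :=
    fun k => continuous_piProj.comp (continuous_fst.prodMk continuous_const)
  have hKclosed : IsClosed K := by
    have h1 : IsClosed {p : Hq × (Fin 5 → ℝ) × (Fin 5 → Hq) | p.1 ∈ sphereS} := by
      have hS : IsClosed sphereS := by
        have : sphereS = (fun I : Hq => I ^ 2) ⁻¹' {-1} := rfl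
        rw [this]
        exact isClosed_singleton.preimage (continuous_pow 2)
      exact hS.preimage continuous_fst
    have h2 : IsClosed {p : Hq × (Fin 5 → ℝ) × (Fin 5 → Hq) | ∀ i, 0 ≤ p.2.1 i} := by
      rw [Set.setOf_forall]
      exact isClosed_iInter fun i => isClosed_le continuous_const
        ((continuous_apply i).comp (continuous_fst.comp continuous_snd))
    have h3 : IsClosed {p : Hq × (Fin 5 → ℝ) × (Fin 5 → Hq) | (∑ i, p.2.1 i) = 1} :=
      isClosed_eq (continuous_finset_sum _ fun i _ =>
        (continuous_apply i).comp (continuous_fst.comp continuous_snd)) continuous_const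
    have h4 : IsClosed {p : Hq × (Fin 5 → ℝ) × (Fin 5 → Hq) |
        ∀ i, evalQ (projPoly p.1 P) (p.2.2 i) = 0 ∧ piProj p.1 (p.2.2 i) = p.2.2 i} := by
      rw [Set.setOf_forall]
      refine isClosed_iInter fun i => ?_
      have hzc : Continuous fun p : Hq × (Fin 5 → ℝ) × (Fin 5 → Hq) => p.2.2 i :=
        (continuous_apply i).comp (continuous_snd.comp continuous_snd)
      have e1 : IsClosed {p : Hq × (Fin 5 → ℝ) × (Fin 5 → Hq) |
          evalQ (projPoly p.1 P) (p.2.2 i) = 0} := by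
        have hset : {p : Hq × (Fin 5 → ℝ) × (Fin 5 → Hq) | evalQ (projPoly p.1 P) (p.2.2 i) = 0}
            = {p : Hq × (Fin 5 → ℝ) × (Fin 5 → Hq) |
              (∑ k ∈ Finset.range (P.natDegree + 1),
                (p.2.2 i) ^ k * piProj p.1 (P.coeff k)) = 0} := by
          ext p; simp only [Set.mem_setOf_eq, evalQ_projPoly]
        rw [hset]
        exact isClosed_eq (continuous_finset_sum _ fun k _ =>
          (hzc.pow k).mul (hcont_pi k)) continuous_const
      have e2 : IsClosed {p : Hq × (Fin 5 → ℝ) × (Fin 5 → Hq) |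
          piProj p.1 (p.2.2 i) = p.2.2 i} :=
        isClosed_eq (continuous_piProj.comp (continuous_fst.prodMk hzc)) hzc
      exact e1.inter e2
    have hKeq : K = ({p : Hq × (Fin 5 → ℝ) × (Fin 5 → Hq) | p.1 ∈ sphereS}
        ∩ {p | ∀ i, 0 ≤ p.2.1 i} ∩ {p | (∑ i, p.2.1 i) = 1}
        ∩ {p | ∀ i, evalQ (projPoly p.1 P) (p.2.2 i) = 0
            ∧ piProj p.1 (p.2.2 i) = p.2.2 i}) := by
      ext p
      simp only [hK, Set.mem_setOf_eq, Set.mem_inter_iff]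
      tauto
    rw [hKeq]
    exact ((h1.inter h2).inter h3).inter h4
  have hKcompact : IsCompact K := by
    have hball : IsCompact (Metric.closedBall (0 : Hq) 1) := isCompact_closedBall 0 1
    have hballR : IsCompact (Metric.closedBall (0 : Hq) R) := isCompact_closedBall 0 R
    have hC : IsCompact ((Metric.closedBall (0 : Hq) 1) ×ˢ
        ((Set.univ.pi fun _ : Fin 5 => Set.Icc (0:ℝ) 1) ×ˢ
          (Set.univ.pi fun _ : Fin 5 => Metric.closedBall (0 : Hq) R))) :=
      hball.prod (((isCompact_univ_pi fun _ => isCompact_Icc)).prod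
        (isCompact_univ_pi fun _ => hballR))
    refine hC.of_isClosed_subset hKclosed ?_
    rintro ⟨I, w, z⟩ ⟨hI, hw0, hw1, hz⟩
    refine ⟨?_, ?_, ?_⟩
    · rw [Metric.mem_closedBall, dist_zero_right, sphereS_norm hI]
    · intro i _
      refine ⟨hw0 i, ?_⟩
      rw [← hw1]
      exact Finset.single_le_sum (fun j _ => hw0 j) (Finset.mem_univ i)
    · intro i _
      rw [Metric.mem_closedBall, dist_zero_right]
      exact root_bound hI hm hdeg (hz i).1
  have hfc : Continuous f :=
    continuous_finset_sum _ fun i _ =>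
      (((continuous_apply i).comp (continuous_fst.comp continuous_snd)).smul
        ((continuous_apply i).comp (continuous_snd.comp continuous_snd)))
  rw [hsnail]
  exact (hKcompact.image hfc).isClosed


end
end

section
/- Let P ∈ ℍ[X] be a monic quaternionic polynomial of degree d ≥ 2 with coefficients a₀, …, a_d. Then the Gauss-Lucas snail sn(P) is a compact subset of ℍ; moreover sn(P) ⊆ {x ∈ ℍ : |x|² ≤ ∑_{k=0}^d |a_k|²}. -/
open Polynomial
open scoped Classical RealInnerProductSpace ENNReal

noncomputable section

namespace SnailAux

open Finset

lemma normsq_eq (q : Hq) : ‖q‖^2 = q.re^2 + q.imI^2 + q.imJ^2 + q.imK^2 := by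
  rw [sq, ← Quaternion.normSq_eq_norm_mul_self, Quaternion.normSq_def']

lemma sphere_comp {I : Hq} (hI : I ∈ sphereS) :
    I.re = 0 ∧ I.imI^2 + I.imJ^2 + I.imK^2 = 1 := by
  have h : I * I = -1 := by rw [← pow_two]; exact hI
  rw [Quaternion.ext_iff] at h
  simp only [Quaternion.re_mul, Quaternion.imI_mul, Quaternion.imJ_mul, Quaternion.imK_mul,
    Quaternion.re_neg, Quaternion.re_one, Quaternion.imI_neg, Quaternion.imI_one,
    Quaternion.imJ_neg, Quaternion.imJ_one, Quaternion.imK_neg, Quaternion.imK_one,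
    neg_zero, neg_neg] at h
  obtain ⟨h1, h2, h3, h4⟩ := h
  have e2 : I.re * I.imI = 0 := by linear_combination h2 / 2
  have e3 : I.re * I.imJ = 0 := by linear_combination h3 / 2
  have e4 : I.re * I.imK = 0 := by linear_combination h4 / 2
  have f2 : (I.re * I.imI)^2 = 0 := by rw [e2]; ring
  have f3 : (I.re * I.imJ)^2 = 0 := by rw [e3]; ring
  have f4 : (I.re * I.imK)^2 = 0 := by rw [e4]; ring
  have key : I.re ^ 2 * (I.re ^ 2 + 1) = 0 := by linear_combination f2 + f3 + f4 + I.re^2 * h1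
  have hre2 : I.re ^ 2 = 0 := by
    rcases mul_eq_zero.mp key with h | h
    · exact h
    · nlinarith [sq_nonneg I.re]
  have hre : I.re = 0 := by
    have := pow_eq_zero_iff (n := 2) (by norm_num) |>.mp hre2
    exact this
  refine ⟨hre, ?_⟩
  rw [hre] at h1
  linarith

lemma sphere_norm {I : Hq} (hI : I ∈ sphereS) : ‖I‖ = 1 := by
  obtain ⟨h1, h2⟩ := sphere_comp hI
  have h : ‖I‖^2 = 1 := by rw [normsq_eq, h1]; linarith
  nlinarith [norm_nonneg I]

end SnailAux
namespace SnailAux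

open Finset

lemma inner_one_right (a : Hq) : ⟪a, (1:Hq)⟫ = a.re := by
  simp [Quaternion.inner_def]

lemma inner_I_right {I : Hq} (hre : I.re = 0) (a : Hq) :
    ⟪a, I⟫ = a.imI * I.imI + a.imJ * I.imJ + a.imK * I.imK := by
  simp [Quaternion.inner_def, Quaternion.re_mul, hre]

lemma piProj_zero (I : Hq) : piProj I 0 = 0 := by simp [piProj]

lemma piProj_one {I : Hq} (hI : I ∈ sphereS) : piProj I 1 = 1 := by
  obtain ⟨h1, _⟩ := sphere_comp hI
  simp [piProj, inner_one_right, inner_I_right h1, Quaternion.imI_one, Quaternion.imJ_one, Quaternion.imK_one]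

lemma piProj_norm_le {I : Hq} (hI : I ∈ sphereS) (a : Hq) : ‖piProj I a‖^2 ≤ ‖a‖^2 := by
  obtain ⟨h1, h2⟩ := sphere_comp hI
  rw [normsq_eq, normsq_eq]
  simp only [piProj, inner_one_right, inner_I_right h1, Quaternion.re_add, Quaternion.imI_add,
    Quaternion.imJ_add, Quaternion.imK_add, Quaternion.re_smul, Quaternion.imI_smul,
    Quaternion.imJ_smul, Quaternion.imK_smul, Quaternion.re_one, Quaternion.imI_one,
    Quaternion.imJ_one, Quaternion.imK_one, h1, smul_eq_mul, mul_zero, mul_one, add_zero,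
    zero_add]
  have ht : (a.imI * I.imI + a.imJ * I.imJ + a.imK * I.imK)^2 ≤ a.imI^2 + a.imJ^2 + a.imK^2 := by
    nlinarith [sq_nonneg (a.imI*I.imJ - a.imJ*I.imI), sq_nonneg (a.imI*I.imK - a.imK*I.imI),
      sq_nonneg (a.imJ*I.imK - a.imK*I.imJ), sq_nonneg a.imI, sq_nonneg a.imJ, sq_nonneg a.imK, h2]
  nlinarith [ht, mul_le_mul_of_nonneg_left ht (sq_nonneg (0:ℝ)), sq_nonneg (a.imI * I.imI + a.imJ * I.imJ + a.imK * I.imK), h2]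

end SnailAux
namespace SnailAux

open Finset

lemma piProj_add (I u v : Hq) : piProj I (u + v) = piProj I u + piProj I v := by
  simp only [piProj, inner_add_left, add_smul]
  abel

lemma piProj_smul (I : Hq) (r : ℝ) (u : Hq) : piProj I (r • u) = r • piProj I u := by
  simp only [piProj, real_inner_smul_left, smul_add, mul_smul]

lemma piProj_I {I : Hq} (hI : I ∈ sphereS) : piProj I I = I := by
  obtain ⟨h1, h2⟩ := sphere_comp hI
  rw [piProj, inner_one_right, h1, inner_I_right h1]
  have h3 : I.imI * I.imI + I.imJ * I.imJ + I.imK * I.imK = 1 := by linear_combination h2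
  rw [h3]
  simp

lemma coe_smul_one (r : ℝ) : algebraMap ℝ Hq r = r • (1 : Hq) :=
  Algebra.algebraMap_eq_smul_one r

lemma mem_Cplane_iff {I : Hq} (hI : I ∈ sphereS) {x : Hq} :
    x ∈ Cplane I ↔ piProj I x = x := by
  constructor
  · rintro ⟨a, b, rfl⟩
    rw [piProj_add, coe_smul_one, piProj_smul, piProj_smul, piProj_one hI, piProj_I hI]
  · intro h
    refine ⟨⟪x, (1:Hq)⟫, ⟪x, I⟫, ?_⟩
    conv_lhs => rw [← h]
    rw [piProj, coe_smul_one]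

end SnailAux
namespace SnailAux

open Finset

lemma coeff_projPoly (I : Hq) (P : Hq[X]) (n : ℕ) :
    (projPoly I P).coeff n = piProj I (P.coeff n) := by
  rw [projPoly, Polynomial.sum]
  simp only [Polynomial.finset_sum_coeff, Polynomial.coeff_C_mul, Polynomial.coeff_X_pow,
    mul_ite, mul_one, mul_zero]
  rw [Finset.sum_congr rfl (fun k _ => by rw [show (if n = k then piProj I (P.coeff k) else 0)
      = (if k = n then piProj I (P.coeff k) else 0) by simp [eq_comm]]),
    Finset.sum_ite_eq' P.support n (fun k => piProj I (P.coeff k))]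
  by_cases h : n ∈ P.support
  · rw [if_pos h]
  · rw [if_neg h, Polynomial.notMem_support_iff.mp h, piProj_zero]

lemma natDegree_projPoly_le (I : Hq) (P : Hq[X]) :
    (projPoly I P).natDegree ≤ P.natDegree :=
  Polynomial.natDegree_le_iff_coeff_eq_zero.mpr fun N hN => by
    rw [coeff_projPoly, Polynomial.coeff_eq_zero_of_natDegree_lt hN, piProj_zero]

lemma evalQ_eq (Q : Hq[X]) (x : Hq) {n : ℕ} (h : Q.natDegree < n) :
    evalQ Q x = ∑ k ∈ Finset.range n, x ^ k * Q.coeff k := by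
  rw [evalQ]
  exact Polynomial.sum_over_range' Q (fun k => by simp) n h

lemma evalQ_projPoly (I : Hq) (P : Hq[X]) (x : Hq) {n : ℕ} (h : P.natDegree < n) :
    evalQ (projPoly I P) x = ∑ k ∈ Finset.range n, x ^ k * piProj I (P.coeff k) := by
  rw [evalQ_eq _ _ (lt_of_le_of_lt (natDegree_projPoly_le I P) h)]
  exact Finset.sum_congr rfl fun k _ => by rw [coeff_projPoly]

end SnailAux
namespace SnailAux

open Finset

lemma root_bound {n : ℕ} (hn : 1 ≤ n) (c : ℕ → Hq) (hc : c n = 1) (x : Hq)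
    (hx : ∑ k ∈ Finset.range (n+1), x ^ k * c k = 0) :
    ‖x‖^2 ≤ ∑ k ∈ Finset.range (n+1), ‖c k‖^2 := by
  have hS0 : (0:ℝ) ≤ ∑ k ∈ Finset.range n, ‖c k‖^2 :=
    Finset.sum_nonneg fun _ _ => sq_nonneg _
  have hRHS : ∑ k ∈ Finset.range (n+1), ‖c k‖^2 = (∑ k ∈ Finset.range n, ‖c k‖^2) + 1 := by
    rw [Finset.sum_range_succ, hc, norm_one, one_pow]
  rw [hRHS]
  set S := ∑ k ∈ Finset.range n, ‖c k‖^2 with hS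
  rcases le_or_gt ‖x‖ 1 with h | h
  · nlinarith [norm_nonneg x]
  · have hsum : x ^ n = -∑ k ∈ Finset.range n, x ^ k * c k := by
      rw [Finset.sum_range_succ, hc, mul_one] at hx
      exact eq_neg_of_add_eq_zero_right hx
    have hnorm : ‖x‖^n ≤ ∑ k ∈ Finset.range n, ‖x‖^k * ‖c k‖ := by
      calc ‖x‖^n = ‖x^n‖ := (norm_pow x n).symm
        _ = ‖∑ k ∈ Finset.range n, x ^ k * c k‖ := by rw [hsum, norm_neg]
        _ ≤ ∑ k ∈ Finset.range n, ‖x ^ k * c k‖ := norm_sum_le _ _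
        _ = ∑ k ∈ Finset.range n, ‖x‖^k * ‖c k‖ := by simp [norm_mul, norm_pow]
    have hpow : ∑ k ∈ Finset.range n, (‖x‖^k)^2 = ∑ k ∈ Finset.range n, (‖x‖^2)^k :=
      Finset.sum_congr rfl fun k _ => by rw [← pow_mul, ← pow_mul, mul_comm]
    have hcs : (∑ k ∈ Finset.range n, ‖x‖^k * ‖c k‖)^2
        ≤ (∑ k ∈ Finset.range n, (‖x‖^2)^k) * S := by
      rw [← hpow]
      exact Finset.sum_mul_sq_le_sq_mul_sq (Finset.range n) (fun k => ‖x‖^k) (fun k => ‖c k‖)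
    set u := ‖x‖^2 with hu
    have hu1 : 1 < u := by nlinarith
    have hgeom : ∑ k ∈ Finset.range n, u^k = (u^n - 1)/(u - 1) := geom_sum_eq (ne_of_gt hu1) n
    have hun : (‖x‖^n)^2 = u^n := by rw [hu, ← pow_mul, ← pow_mul, mul_comm]
    have hx2 : u^n ≤ (u^n - 1)/(u-1) * S := by
      calc u^n = (‖x‖^n)^2 := hun.symm
        _ ≤ (∑ k ∈ Finset.range n, ‖x‖^k * ‖c k‖)^2 := by
            apply pow_le_pow_left₀ (by positivity) hnorm
        _ ≤ (∑ k ∈ Finset.range n, u^k) * S := hcs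
        _ = (u^n - 1)/(u-1) * S := by rw [hgeom]
    have hd : (0:ℝ) < u - 1 := by linarith
    have h5 : u^n * (u-1) ≤ (u^n - 1) * S := by
      rw [div_mul_eq_mul_div, le_div_iff₀ hd] at hx2
      exact hx2
    have hun1 : (1:ℝ) ≤ u^n := one_le_pow₀ (le_of_lt hu1)
    have h6 : (u^n - 1)*S ≤ u^n * S := by nlinarith
    have h7 : u - 1 ≤ S := by
      have hupos : (0:ℝ) < u^n := by positivity
      exact le_of_mul_le_mul_left (h5.trans h6) hupos
    linarith

end SnailAux
namespace SnailAux

open Finset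

lemma re_sum {α : Type*} (s : Finset α) (f : α → Hq) :
    (∑ k ∈ s, f k).re = ∑ k ∈ s, (f k).re := by
  classical
  induction s using Finset.cons_induction with
  | empty => simp [Quaternion.re_zero]
  | cons a s ha ih => rw [Finset.sum_cons, Finset.sum_cons, Quaternion.re_add, ih]

lemma nonconst {d : ℕ} (hd1 : 1 ≤ d) (P : Hq[X]) (hm : P.Monic) (hdeg : P.natDegree = d)
    {I : Hq} (hI : I ∈ sphereS) :
    ¬ ∃ c, ∀ x ∈ Cplane I, evalQ (projPoly I P) x = c := by
  rintro ⟨c, hc⟩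
  set q : Polynomial ℝ :=
    ∑ k ∈ Finset.range (d+1), Polynomial.C ((piProj I (P.coeff k)).re) * Polynomial.X^k with hq
  have heval : ∀ t : ℝ, q.eval t = c.re := by
    intro t
    have hmem : (algebraMap ℝ Hq t) ∈ Cplane I := ⟨t, 0, by simp⟩
    have h1 := hc _ hmem
    rw [evalQ_projPoly I P _ (n := d+1) (by rw [hdeg]; omega)] at h1
    have h2 : (∑ k ∈ Finset.range (d+1),
        (algebraMap ℝ Hq t)^k * piProj I (P.coeff k)).re = c.re := by rw [h1]
    rw [re_sum] at h2
    rw [hq]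
    simp only [Polynomial.eval_finset_sum, Polynomial.eval_mul, Polynomial.eval_C,
      Polynomial.eval_pow, Polynomial.eval_X]
    rw [← h2]
    refine Finset.sum_congr rfl fun k _ => ?_
    have h3 : (algebraMap ℝ Hq t)^k = algebraMap ℝ Hq (t^k) := (map_pow _ t k).symm
    rw [h3, ← Algebra.smul_def, Quaternion.re_smul, smul_eq_mul, mul_comm]
  have hq_eq : q = Polynomial.C c.re := Polynomial.funext fun t => by
    rw [heval]; simp
  have hcoeff : q.coeff d = 1 := by
    rw [hq]
    simp only [Polynomial.finset_sum_coeff, Polynomial.coeff_C_mul, Polynomial.coeff_X_pow,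
      mul_ite, mul_one, mul_zero]
    rw [Finset.sum_ite_eq (Finset.range (d+1)) d
      (fun k => (piProj I (P.coeff k)).re), if_pos (by simp)]
    have : P.coeff d = 1 := by rw [← hdeg]; exact hm
    rw [this, piProj_one hI, Quaternion.re_one]
  rw [hq_eq, Polynomial.coeff_C, if_neg (by omega)] at hcoeff
  exact one_ne_zero hcoeff.symm
lemma padSum {M : Type*} [AddCommMonoid M] (t : Finset Hq) (hn : t.card ≤ 5) (F : Hq → M) :
    ∑ j : Fin 5, (if h : (j:ℕ) < t.card then F ((t.equivFin.symm ⟨(j:ℕ), h⟩ : t) : Hq) else 0)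
      = ∑ i ∈ t, F i := by
  classical
  set G : ℕ → M := fun m =>
    if h : m < t.card then F ((t.equivFin.symm ⟨m, h⟩ : t) : Hq) else 0 with hG
  have h1 : ∑ j : Fin 5, G (j:ℕ) = ∑ m ∈ Finset.range 5, G m := Fin.sum_univ_eq_sum_range G 5
  have h2 : ∑ m ∈ Finset.range 5, G m = ∑ m ∈ Finset.range t.card, G m :=
    (Finset.sum_subset (Finset.range_subset_range.mpr hn)
      (fun m _ hm => dif_neg (by simpa using hm))).symm
  have h3 : ∑ m ∈ Finset.range t.card, G m = ∑ j : Fin t.card, G (j:ℕ) :=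
    (Fin.sum_univ_eq_sum_range G t.card).symm
  have h4 : ∑ j : Fin t.card, G (j:ℕ) = ∑ j : Fin t.card, F ((t.equivFin.symm j : t) : Hq) :=
    Finset.sum_congr rfl fun j _ => by rw [hG]; simp only [dif_pos j.isLt]
  have h5 : ∑ j : Fin t.card, F ((t.equivFin.symm j : t) : Hq) = ∑ i : t, F i :=
    Equiv.sum_comp t.equivFin.symm (fun i : t => F (i : Hq))
  have h6 : ∑ i : t, F (i : Hq) = ∑ i ∈ t, F i := Finset.sum_coe_sort t F
  exact h1.trans (h2.trans (h3.trans (h4.trans (h5.trans h6))))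
end SnailAux

set_option maxHeartbeats 2000000 in
theorem stmt16 (d : ℕ) (hd : 2 ≤ d) (P : Hq[X]) (hm : P.Monic)
    (hdeg : P.natDegree = d) :
    IsCompact (snail P) ∧
    snail P ⊆ {x : Hq | ‖x‖ ^ 2 ≤ ∑ k ∈ Finset.range (d + 1), ‖P.coeff k‖ ^ 2} := by
  classical
  set B : ℝ := ∑ k ∈ Finset.range (d + 1), ‖P.coeff k‖ ^ 2 with hB
  have hd1 : 1 ≤ d := by omega
  have hF : ∀ (I x : Hq), evalQ (projPoly I P) x
      = ∑ k ∈ Finset.range (d+1), x ^ k * piProj I (P.coeff k) :=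
    fun I x => SnailAux.evalQ_projPoly I P x (by rw [hdeg]; omega)
  have hroot : ∀ {I : Hq}, I ∈ sphereS → ∀ {x : Hq}, x ∈ VQ (projPoly I P) → ‖x‖^2 ≤ B := by
    intro I hI x hx
    have hx' : ∑ k ∈ Finset.range (d+1), x ^ k * piProj I (P.coeff k) = 0 := by
      rw [← hF]; exact hx
    have hcd : piProj I (P.coeff d) = 1 := by
      have h1 : P.coeff d = 1 := by rw [← hdeg]; exact hm
      rw [h1, SnailAux.piProj_one hI]
    have h2 := SnailAux.root_bound hd1 (fun k => piProj I (P.coeff k)) hcd x hx'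
    exact h2.trans (Finset.sum_le_sum fun k _ => SnailAux.piProj_norm_le hI (P.coeff k))
  have hKC : ∀ {I : Hq}, I ∈ sphereS →
      KC I (projPoly I P) = convexHull ℝ (VQ (projPoly I P) ∩ Cplane I) := by
    intro I hI
    rw [KC, if_neg (SnailAux.nonconst hd1 P hm hdeg hI)]
  have hB0 : 0 ≤ B := Finset.sum_nonneg fun _ _ => sq_nonneg _
  set R : ℝ := Real.sqrt B with hR
  have hRle : ∀ {y : Hq}, ‖y‖^2 ≤ B → ‖y‖ ≤ R := by
    intro y hy
    calc ‖y‖ = Real.sqrt (‖y‖^2) := (Real.sqrt_sq (norm_nonneg y)).symm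
      _ ≤ R := Real.sqrt_le_sqrt hy
  have hsub : snail P ⊆ {x : Hq | ‖x‖ ^ 2 ≤ B} := by
    intro x hx
    rw [snail] at hx
    obtain ⟨I, hI, hxI⟩ : ∃ I ∈ sphereS, x ∈ KC I (projPoly I P) := by simpa using hx
    rw [hKC hI] at hxI
    have hball : VQ (projPoly I P) ∩ Cplane I ⊆ Metric.closedBall 0 R := by
      rintro y ⟨hy1, _⟩
      rw [Metric.mem_closedBall, dist_zero_right]
      exact hRle (hroot hI hy1)
    have h3 := convexHull_min hball (convex_closedBall _ _) hxI
    rw [Metric.mem_closedBall, dist_zero_right] at h3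
    have h4 : ‖x‖^2 ≤ R^2 := pow_le_pow_left₀ (norm_nonneg x) h3 2
    rwa [hR, Real.sq_sqrt hB0] at h4
  refine ⟨?_, hsub⟩
  -- compactness
  have hpiC : Continuous fun p : Hq × Hq => piProj p.1 p.2 := by
    simp only [piProj]
    exact ((Continuous.inner (𝕜 := ℝ) continuous_snd continuous_const).smul continuous_const).add
      ((Continuous.inner (𝕜 := ℝ) continuous_snd continuous_fst).smul continuous_fst)
  set g : Hq × (Fin 5 → ℝ) × (Fin 5 → Hq) → Hq :=
    fun p => ∑ j : Fin 5, p.2.1 j • p.2.2 j with hg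
  set U : Set (Hq × (Fin 5 → ℝ) × (Fin 5 → Hq)) :=
    {p | p.1 ∈ sphereS} ∩ {p | p.2.1 ∈ stdSimplex ℝ (Fin 5)} ∩
      ⋂ j : Fin 5,
        ({p | ∑ k ∈ Finset.range (d+1), (p.2.2 j) ^ k * piProj p.1 (P.coeff k) = 0}
          ∩ {p | piProj p.1 (p.2.2 j) = p.2.2 j}) with hU
  have hgC : Continuous g := continuous_finset_sum _ fun j _ =>
    ((continuous_apply j).comp (continuous_fst.comp continuous_snd)).smul
      ((continuous_apply j).comp (continuous_snd.comp continuous_snd))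
  have hz2 : ∀ j : Fin 5,
      Continuous fun p : Hq × (Fin 5 → ℝ) × (Fin 5 → Hq) => p.2.2 j :=
    fun j => (continuous_apply j).comp (continuous_snd.comp continuous_snd)
  have hUclosed : IsClosed U := by
    rw [hU]
    refine IsClosed.inter (IsClosed.inter ?_ ?_) (isClosed_iInter fun j => IsClosed.inter ?_ ?_)
    · exact (isClosed_eq (continuous_pow 2) continuous_const).preimage continuous_fst
    · exact (isClosed_stdSimplex ℝ (Fin 5)).preimage (continuous_fst.comp continuous_snd)
    · refine isClosed_eq (continuous_finset_sum _ fun k _ => Continuous.mul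
        (Continuous.pow (hz2 j) k) ?_) continuous_const
      exact hpiC.comp (continuous_fst.prodMk continuous_const)
    · exact isClosed_eq (hpiC.comp (continuous_fst.prodMk (hz2 j))) (hz2 j)
  have hUbdd : Bornology.IsBounded U := by
    refine Bornology.IsBounded.subset (Bornology.IsBounded.prod
      (Metric.isBounded_closedBall (x := (0:Hq)) (r := 1))
      (Bornology.IsBounded.prod
        (Metric.isBounded_closedBall (x := (0:Fin 5 → ℝ)) (r := 1))
        (Metric.isBounded_closedBall (x := (0:Fin 5 → Hq)) (r := R)))) ?_
    rintro ⟨I, w, z⟩ hp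
    obtain ⟨⟨hI, hw⟩, hz⟩ := hp
    rw [Set.mem_iInter] at hz
    refine ⟨?_, ?_, ?_⟩
    · rw [Metric.mem_closedBall, dist_zero_right, SnailAux.sphere_norm hI]
    · rw [Metric.mem_closedBall, dist_zero_right]
      refine (pi_norm_le_iff_of_nonneg zero_le_one).mpr fun j => ?_
      have h1 : w j ≤ 1 := by
        have := Finset.single_le_sum (f := w) (fun i _ => hw.1 i) (Finset.mem_univ j)
        rw [hw.2] at this
        exact this
      rw [Real.norm_eq_abs, abs_le]
      exact ⟨by linarith [hw.1 j], h1⟩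
    · rw [Metric.mem_closedBall, dist_zero_right]
      refine (pi_norm_le_iff_of_nonneg (Real.sqrt_nonneg B)).mpr fun j => ?_
      refine hRle (hroot hI ?_)
      show evalQ (projPoly I P) (z j) = 0
      rw [hF]
      exact (hz j).1
  have hUcompact : IsCompact U := Metric.isCompact_of_isClosed_isBounded hUclosed hUbdd
  have himg : snail P = g '' U := by
    apply Set.Subset.antisymm
    · intro x hx
      rw [snail] at hx
      obtain ⟨I, hI, hxI⟩ : ∃ I ∈ sphereS, x ∈ KC I (projPoly I P) := by simpa using hx
      rw [hKC hI, convexHull_eq_union] at hxI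
      simp only [Set.mem_iUnion, exists_prop] at hxI
      obtain ⟨t, hts, hai, hxt⟩ := hxI
      have htcard : t.card ≤ 5 := by
        have h1 := hai.card_le_finrank_succ
        rw [Fintype.card_coe] at h1
        have h2 : Module.finrank ℝ (vectorSpan ℝ (Set.range ((↑) : t → Hq)))
            ≤ Module.finrank ℝ Hq := Submodule.finrank_le _
        rw [Quaternion.finrank_eq_four] at h2
        omega
      have htne : t.Nonempty := by
        rcases Finset.eq_empty_or_nonempty t with rfl | h
        · simp at hxt
        · exact h
      obtain ⟨x0, hx0⟩ := htne
      rw [Finset.convexHull_eq] at hxt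
      obtain ⟨w, hw0, hw1, hwx⟩ := hxt
      rw [Finset.centerMass_eq_of_sum_1 _ _ hw1] at hwx
      set z : Fin 5 → Hq := fun j =>
        if h : (j:ℕ) < t.card then ((t.equivFin.symm ⟨(j:ℕ), h⟩ : t) : Hq) else x0 with hzdef
      set w' : Fin 5 → ℝ := fun j =>
        if h : (j:ℕ) < t.card then w ((t.equivFin.symm ⟨(j:ℕ), h⟩ : t) : Hq) else 0 with hw'def
      have hzmem : ∀ j, z j ∈ (t : Set Hq) := by
        intro j
        rw [hzdef]
        dsimp only
        split
        · exact (t.equivFin.symm _).2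
        · exact hx0
      have hw'nonneg : ∀ j, 0 ≤ w' j := by
        intro j
        rw [hw'def]
        dsimp only
        split
        · exact hw0 _ (t.equivFin.symm _).2
        · exact le_refl 0
      have hw'sum : ∑ j : Fin 5, w' j = 1 := by
        rw [hw'def]
        exact (SnailAux.padSum t htcard w).trans hw1
      have hcomb : g (I, w', z) = x := by
        rw [hg]
        dsimp only
        rw [← hwx]
        have hterm : ∀ j : Fin 5, w' j • z j
            = (if h : (j:ℕ) < t.card then
                (fun i => w i • i) ((t.equivFin.symm ⟨(j:ℕ), h⟩ : t) : Hq) else 0) := by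
          intro j
          rw [hw'def, hzdef]
          dsimp only
          split
          · rfl
          · simp
        rw [Finset.sum_congr rfl fun j _ => hterm j,
          SnailAux.padSum t htcard (fun i => w i • i)]
        simp [id]
      refine ⟨(I, w', z), ⟨⟨hI, ⟨hw'nonneg, hw'sum⟩⟩, ?_⟩, hcomb⟩
      rw [Set.mem_iInter]
      intro j
      obtain ⟨h1, h2⟩ := hts (hzmem j)
      refine ⟨?_, (SnailAux.mem_Cplane_iff hI).mp h2⟩
      show ∑ k ∈ Finset.range (d+1), (z j) ^ k * piProj I (P.coeff k) = 0
      rw [← hF]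
      exact h1
    · rintro _ ⟨⟨I, w, z⟩, hp, rfl⟩
      obtain ⟨⟨hI, hw⟩, hz⟩ := hp
      rw [Set.mem_iInter] at hz
      rw [snail]
      refine Set.mem_biUnion hI ?_
      rw [hKC hI]
      refine (convex_convexHull ℝ _).sum_mem (fun j _ => hw.1 j) hw.2
        fun j _ => subset_convexHull ℝ _ ?_
      refine ⟨?_, (SnailAux.mem_Cplane_iff hI).mpr (hz j).2⟩
      show evalQ (projPoly I P) (z j) = 0
      rw [hF]
      exact (hz j).1
  rw [himg]
  exact hUcompact.image hgC
end
end

section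
/- Let d ≥ 3 and let P(X) = X^{d−3}·(X−i)·(X−j)·(X−k) ∈ ℍ[X]. Then C(P') = d⁻¹ √(8d² − 24d + 24); moreover, for every imaginary unit I = α₁i + α₂j + α₃k ∈ S one has C(P^I) = √(4 + 4α₁α₃) ≤ √6, hence sup_{I∈S} C(P^I) ≤ √6, and for every d ≥ 11 one has sup_{I∈S} C(P^I) < C(P'). -/
open Polynomial
open scoped Classical RealInnerProductSpace ENNReal

noncomputable section

-- ==================== auxiliary lemmas ====================

namespace Stmt19Aux

open Quaternion

@[simp] lemma qi_re : qi.re = 0 := rfl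
@[simp] lemma qi_imI : qi.imI = 1 := rfl
@[simp] lemma qi_imJ : qi.imJ = 0 := rfl
@[simp] lemma qi_imK : qi.imK = 0 := rfl
@[simp] lemma qj_re : qj.re = 0 := rfl
@[simp] lemma qj_imI : qj.imI = 0 := rfl
@[simp] lemma qj_imJ : qj.imJ = 1 := rfl
@[simp] lemma qj_imK : qj.imK = 0 := rfl
@[simp] lemma qk_re : qk.re = 0 := rfl
@[simp] lemma qk_imI : qk.imI = 0 := rfl
@[simp] lemma qk_imJ : qk.imJ = 0 := rfl
@[simp] lemma qk_imK : qk.imK = 1 := rfl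

noncomputable def quad (n : ℕ) (c₀ c₁ c₂ c₃ : Hq) : Hq[X] :=
  C c₃ * X^(n+3) + C c₂ * X^(n+2) + C c₁ * X^(n+1) + C c₀ * X^n

lemma quad_coeff (n : ℕ) (c₀ c₁ c₂ c₃ : Hq) (k : ℕ) :
    (quad n c₀ c₁ c₂ c₃).coeff k =
      if k = n+3 then c₃ else if k = n+2 then c₂ else if k = n+1 then c₁ else
      if k = n then c₀ else 0 := by
  simp only [quad, coeff_add, coeff_C_mul, coeff_X_pow]
  split_ifs <;> simp_all

lemma quad_natDegree (n : ℕ) (c₀ c₁ c₂ c₃ : Hq) (h : c₃ ≠ 0) :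
    (quad n c₀ c₁ c₂ c₃).natDegree = n + 3 := by
  unfold quad; compute_degree!

lemma quad_CQ (n : ℕ) (c₀ c₁ c₂ c₃ : Hq) (h : c₃ ≠ 0) :
    CQ (quad n c₀ c₁ c₂ c₃) =
      ‖c₃‖⁻¹ * Real.sqrt (‖c₀‖^2 + ‖c₁‖^2 + ‖c₂‖^2 + ‖c₃‖^2) := by
  have hnd := quad_natDegree n c₀ c₁ c₂ c₃ h
  have hlc : (quad n c₀ c₁ c₂ c₃).leadingCoeff = c₃ := by
    rw [leadingCoeff, hnd, quad_coeff]; simp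
  rw [CQ, hnd, hlc]
  congr 1
  have hz : ∀ j ∈ Finset.range n, ‖(quad n c₀ c₁ c₂ c₃).coeff j‖ ^ 2 = 0 := by
    intro j hj
    rw [Finset.mem_range] at hj
    rw [quad_coeff]
    split_ifs <;> first | omega | simp
  rw [show n + 3 + 1 = n + 1 + 1 + 1 + 1 from rfl, Finset.sum_range_succ,
    Finset.sum_range_succ, Finset.sum_range_succ, Finset.sum_range_succ,
    Finset.sum_eq_zero hz]
  simp only [quad_coeff]
  norm_num

noncomputable def tri (m : ℕ) (e c₀ c₁ c₂ : Hq) : Hq[X] :=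
  C c₂ * X^(m+2) + C c₁ * X^(m+1) + C c₀ * X^m + C e * X^(m-1)

lemma tri_coeff (m : ℕ) (e c₀ c₁ c₂ : Hq) (k : ℕ) :
    (tri m e c₀ c₁ c₂).coeff k =
      (if k = m+2 then c₂ else 0) + (if k = m+1 then c₁ else 0) +
      (if k = m then c₀ else 0) + (if k = m-1 then e else 0) := by
  simp only [tri, coeff_add, coeff_C_mul, coeff_X_pow, mul_ite, mul_one, mul_zero]

lemma tri_natDegree (m : ℕ) (e c₀ c₁ c₂ : Hq) (h : c₂ ≠ 0) :
    (tri m e c₀ c₁ c₂).natDegree = m + 2 := by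
  unfold tri; compute_degree!
  · rw [if_neg (show ¬(m+2=m-1) by omega), add_zero]; exact h
  · omega
  · omega

lemma tri_CQ (m : ℕ) (e c₀ c₁ c₂ : Hq) (h : c₂ ≠ 0) (he : m = 0 → e = 0) :
    CQ (tri m e c₀ c₁ c₂) =
      ‖c₂‖⁻¹ * Real.sqrt (‖e‖^2 + ‖c₀‖^2 + ‖c₁‖^2 + ‖c₂‖^2) := by
  have hnd := tri_natDegree m e c₀ c₁ c₂ h
  have hlc : (tri m e c₀ c₁ c₂).leadingCoeff = c₂ := by
    rw [leadingCoeff, hnd, tri_coeff]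
    have : ¬ (m + 2 = m - 1) := by omega
    split_ifs <;> simp_all
  rw [CQ, hnd, hlc]
  congr 1
  have hsum : ∑ k ∈ Finset.range m, ‖(tri m e c₀ c₁ c₂).coeff k‖ ^ 2 = ‖e‖^2 := by
    cases m with
    | zero => simp [he rfl]
    | succ n =>
      rw [Finset.sum_range_succ, Finset.sum_eq_zero, tri_coeff]
      · have h1 : ¬ (n = n+1+2) := by omega
        have h2 : ¬ (n = n+1+1) := by omega
        have h3 : ¬ (n = n+1) := by omega
        have h4 : n = n+1-1 := by omega
        rw [if_neg h1, if_neg h2, if_neg h3, if_pos h4]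
        simp
      · intro j hj
        rw [Finset.mem_range] at hj
        rw [tri_coeff]
        split_ifs <;> first | omega | simp
  rw [show m + 2 + 1 = m + 1 + 1 + 1 from rfl, Finset.sum_range_succ,
    Finset.sum_range_succ, Finset.sum_range_succ, hsum]
  have hm : (if (m:ℕ) = m - 1 then e else (0:Hq)) = 0 := by
    split_ifs with hh
    · exact he (by omega)
    · rfl
  simp only [tri_coeff]
  rw [hm]
  have h1 : ¬ (m = m+2) := by omega
  have h2 : ¬ (m = m+1) := by omega
  have h3 : ¬ (m+1 = m+2) := by omega
  have h4 : ¬ (m+1 = m-1) := by omega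
  have h5 : ¬ (m+2 = m+1) := by omega
  have h6 : ¬ (m+2 = m) := by omega
  have h7 : ¬ (m+2 = m-1) := by omega
  have h8 : ¬ (m+1 = m) := by omega
  simp only [if_neg h1, if_neg h2, if_neg h3, if_neg h4, if_neg h5, if_neg h6,
    if_neg h7, if_neg h8, if_pos rfl]
  simp

lemma quad_deriv (m : ℕ) (c₀ c₁ c₂ c₃ : Hq) :
    derivative (quad m c₀ c₁ c₂ c₃) =
      tri m (c₀ * (m:ℕ)) (c₁ * ((m+1 : ℕ))) (c₂ * ((m+2:ℕ))) (c₃ * ((m+3:ℕ))) := by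
  simp only [quad, tri, derivative_add, derivative_C_mul, derivative_X_pow, ← C_mul,
    ← mul_assoc, Nat.add_sub_cancel, show m+3-1 = m+2 from rfl, show m+2-1 = m+1 from rfl]

lemma piProj_zero (I : Hq) : piProj I 0 = 0 := by simp [piProj]

lemma projPoly_coeff (I : Hq) (P : Hq[X]) (n : ℕ) :
    (projPoly I P).coeff n = piProj I (P.coeff n) := by
  rw [projPoly, Polynomial.sum, finset_sum_coeff]
  simp only [coeff_C_mul, coeff_X_pow, mul_ite, mul_one, mul_zero]
  rw [Finset.sum_ite_eq P.support n (fun k => piProj I (P.coeff k))]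
  split_ifs with h
  · rfl
  · rw [notMem_support_iff.mp h, piProj_zero]

lemma projPoly_quad (I : Hq) (n : ℕ) (c₀ c₁ c₂ c₃ : Hq) :
    projPoly I (quad n c₀ c₁ c₂ c₃) =
      quad n (piProj I c₀) (piProj I c₁) (piProj I c₂) (piProj I c₃) := by
  refine Polynomial.ext fun k => ?_
  rw [projPoly_coeff, quad_coeff, quad_coeff]
  split_ifs <;> simp [piProj_zero]

noncomputable def qa : Hq := -(qi+qj+qk)
noncomputable def qb : Hq := qi - qj + qk

section Jlem
variable (α₁ α₂ α₃ : ℝ)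

local notation "J" => α₁ • qi + α₂ • qj + α₃ • qk

lemma J_re : (J : Hq).re = 0 := by simp
lemma J_imI : (J : Hq).imI = α₁ := by simp
lemma J_imJ : (J : Hq).imJ = α₂ := by simp
lemma J_imK : (J : Hq).imK = α₃ := by simp

lemma inner_one (c : Hq) : ⟪c, (1:Hq)⟫ = c.re := by
  simp [Quaternion.inner_def]

lemma inner_J (c : Hq) : ⟪c, (J : Hq)⟫ = α₁ * c.imI + α₂ * c.imJ + α₃ * c.imK := by
  simp [Quaternion.inner_def, Quaternion.re_mul, J_re, J_imI, J_imJ, J_imK]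
  ring

lemma piProj_J (c : Hq) :
    piProj (J : Hq) c = c.re • (1:Hq) + (α₁ * c.imI + α₂ * c.imJ + α₃ * c.imK) • (J : Hq) := by
  rw [piProj, inner_one, inner_J]

lemma norm_J_sq : ‖(J : Hq)‖^2 = α₁^2 + α₂^2 + α₃^2 := by
  rw [sq, ← Quaternion.normSq_eq_norm_mul_self, Quaternion.normSq_def',
    J_re, J_imI, J_imJ, J_imK]
  ring

lemma piProj_J_one : piProj (J : Hq) 1 = 1 := by
  rw [piProj_J]; simp

lemma piProj_J_qa : piProj (J : Hq) qa = (-(α₁+α₂+α₃)) • (J : Hq) := by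
  rw [piProj_J]
  have h1 : (qa).re = 0 := by simp [qa]
  have h2 : (qa).imI = -1 := by simp [qa]
  have h3 : (qa).imJ = -1 := by simp [qa]
  have h4 : (qa).imK = -1 := by simp [qa]
  rw [h1, h2, h3, h4]
  match_scalars <;> ring

lemma piProj_J_qb : piProj (J : Hq) qb = (α₁-α₂+α₃) • (J : Hq) := by
  rw [piProj_J]
  have h1 : (qb).re = 0 := by simp [qb]
  have h2 : (qb).imI = 1 := by simp [qb]
  have h3 : (qb).imJ = -1 := by simp [qb]
  have h4 : (qb).imK = 1 := by simp [qb]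
  rw [h1, h2, h3, h4]
  match_scalars <;> ring

end Jlem

lemma sphere_char {I : Hq} (hI : I ∈ sphereS) :
    I = I.imI • qi + I.imJ • qj + I.imK • qk ∧ I.imI^2 + I.imJ^2 + I.imK^2 = 1 := by
  have h : I * I = -1 := by rw [← sq]; exact hI
  have hre : (I*I).re = (-1 : Hq).re := by rw [h]
  have hi : (I*I).imI = (-1 : Hq).imI := by rw [h]
  have hj : (I*I).imJ = (-1 : Hq).imJ := by rw [h]
  have hk : (I*I).imK = (-1 : Hq).imK := by rw [h]
  simp [Quaternion.re_mul, Quaternion.imI_mul, Quaternion.imJ_mul,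
    Quaternion.imK_mul] at hre hi hj hk
  have hr0 : I.re = 0 := by
    nlinarith [sq_nonneg I.re, sq_nonneg I.imI, sq_nonneg I.imJ, sq_nonneg I.imK,
      mul_self_nonneg (I.re*I.imI)]
  constructor
  · ext <;> simp [hr0]
  · nlinarith [hre, hr0]

lemma triple_expand :
    ((X:Hq[X]) - C qi)*(X - C qj)*(X - C qk) = X^3 + C qa * X^2 + C qb * X + 1 := by
  have h1 : qi * qj = qk := by ext <;> simp [Quaternion.re_mul, Quaternion.imI_mul, Quaternion.imJ_mul, Quaternion.imK_mul]
  have h2 : qi * qk = -qj := by ext <;> simp [Quaternion.re_mul, Quaternion.imI_mul, Quaternion.imJ_mul, Quaternion.imK_mul]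
  have h3 : qj * qk = qi := by ext <;> simp [Quaternion.re_mul, Quaternion.imI_mul, Quaternion.imJ_mul, Quaternion.imK_mul]
  have h4 : qk * qk = -1 := by ext <;> simp [Quaternion.re_mul, Quaternion.imI_mul, Quaternion.imJ_mul, Quaternion.imK_mul]
  have hX : ∀ (a : Hq) (p : Hq[X]), X * (C a * p) = C a * (X * p) := fun a p => by
    rw [← mul_assoc, X_mul_C, mul_assoc]
  have hC : ∀ (a b : Hq) (p : Hq[X]), C a * (C b * p) = C (a*b) * p := fun a b p => by
    rw [← mul_assoc, ← C_mul]
  rw [qa, qb]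
  simp only [sub_mul, mul_sub, C_add, C_neg, neg_add, add_mul, neg_mul, mul_assoc,
    X_mul_C, hX, hC, ← C_mul, h1, h2, h3, h4, C_sub, C_1, pow_succ, pow_zero, one_mul]
  abel

lemma P_eq_quad (m : ℕ) :
    (X:Hq[X])^m * (X - C qi) * (X - C qj) * (X - C qk) = quad m 1 qb qa 1 := by
  have hswap : ∀ (c : Hq) (k : ℕ), (X:Hq[X])^m * (C c * X^k) = C c * X^(m+k) :=
    fun c k => by rw [← mul_assoc, X_pow_mul, mul_assoc, ← pow_add]
  rw [mul_assoc, mul_assoc, ← mul_assoc (X - C qi), triple_expand, quad]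
  rw [mul_add, mul_add, mul_add, mul_one, ← pow_add, hswap,
    show (C qb * X : Hq[X]) = C qb * X^1 by rw [pow_one], hswap]
  simp only [C_1, one_mul]

lemma norm_nat (n : ℕ) : ‖((n:ℕ) : Hq)‖ = (n : ℝ) := by
  have : ((n:ℕ) : Hq) = (((n:ℕ) : ℝ) : Hq) := by push_cast; ring
  rw [this, Quaternion.norm_coe, Real.norm_eq_abs, abs_of_nonneg (by positivity)]

lemma norm_qa_sq : ‖qa‖^2 = 3 := by
  rw [sq, ← Quaternion.normSq_eq_norm_mul_self, Quaternion.normSq_def']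
  simp [qa]
  norm_num

lemma norm_qb_sq : ‖qb‖^2 = 3 := by
  rw [sq, ← Quaternion.normSq_eq_norm_mul_self, Quaternion.normSq_def']
  simp [qb]
  norm_num

end Stmt19Aux

open Stmt19Aux in
theorem stmt19 (d : ℕ) (hd : 3 ≤ d) (P : Hq[X])
    (hP : P = X ^ (d - 3) * (X - C qi) * (X - C qj) * (X - C qk)) :
    CQ (derivative P) = (d : ℝ)⁻¹ * Real.sqrt (8 * (d : ℝ) ^ 2 - 24 * d + 24) ∧
    (∀ α₁ α₂ α₃ : ℝ, α₁ ^ 2 + α₂ ^ 2 + α₃ ^ 2 = 1 →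
      CQ (projPoly (α₁ • qi + α₂ • qj + α₃ • qk) P) = Real.sqrt (4 + 4 * α₁ * α₃) ∧
      Real.sqrt (4 + 4 * α₁ * α₃) ≤ Real.sqrt 6) ∧
    (⨆ I ∈ sphereS, CExt (projPoly I P)) ≤ ENNReal.ofReal (Real.sqrt 6) ∧
    (11 ≤ d → (⨆ I ∈ sphereS, CExt (projPoly I P)) < ENNReal.ofReal (CQ (derivative P))) := by
  obtain ⟨m, rfl⟩ := Nat.exists_eq_add_of_le hd
  rw [show (3 + m) - 3 = m by omega, P_eq_quad] at hP
  subst hP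
  have hcast : ((3+m : ℕ) : ℝ) = (m:ℝ) + 3 := by push_cast; ring
  have hd1 : CQ (derivative (quad m 1 qb qa 1)) =
      ((3+m : ℕ) : ℝ)⁻¹ * Real.sqrt (8*((3+m:ℕ):ℝ)^2 - 24*((3+m:ℕ):ℝ) + 24) := by
    have hne : ((m+3:ℕ):Hq) ≠ 0 := by
      intro h
      have h2 : ‖((m+3:ℕ):Hq)‖ = 0 := by rw [h, norm_zero]
      rw [norm_nat] at h2
      push_cast at h2
      linarith
    rw [quad_deriv, tri_CQ _ _ _ _ _ (mul_ne_zero one_ne_zero hne)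
      (fun h0 => by subst h0; simp)]
    have n3 : ‖(1:Hq) * ((m+3:ℕ):Hq)‖ = (m:ℝ)+3 := by
      rw [one_mul, norm_nat]; push_cast; ring
    have n0 : ‖(1:Hq) * ((m:ℕ):Hq)‖^2 = (m:ℝ)^2 := by rw [one_mul, norm_nat]
    have n1 : ‖qb * ((m+1:ℕ):Hq)‖^2 = 3*((m:ℝ)+1)^2 := by
      rw [norm_mul, mul_pow, norm_qb_sq, norm_nat]; push_cast; ring
    have n2 : ‖qa * ((m+2:ℕ):Hq)‖^2 = 3*((m:ℝ)+2)^2 := by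
      rw [norm_mul, mul_pow, norm_qa_sq, norm_nat]; push_cast; ring
    rw [n3, n0, n1, n2, hcast]
    congr 2
    ring
  have part2 : ∀ α₁ α₂ α₃ : ℝ, α₁^2 + α₂^2 + α₃^2 = 1 →
      CQ (projPoly (α₁ • qi + α₂ • qj + α₃ • qk) (quad m 1 qb qa 1)) =
        Real.sqrt (4 + 4*α₁*α₃) := by
    intro α₁ α₂ α₃ hs
    rw [projPoly_quad, piProj_J_one, piProj_J_qa, piProj_J_qb,
      quad_CQ _ _ _ _ _ one_ne_zero]
    have hJ : ‖(α₁ • qi + α₂ • qj + α₃ • qk : Hq)‖^2 = 1 := by rw [norm_J_sq]; exact hs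
    have na : ‖(-(α₁+α₂+α₃)) • (α₁ • qi + α₂ • qj + α₃ • qk : Hq)‖^2 = (α₁+α₂+α₃)^2 := by
      rw [norm_smul, mul_pow, hJ, mul_one, Real.norm_eq_abs, sq_abs]; ring
    have nb : ‖(α₁-α₂+α₃) • (α₁ • qi + α₂ • qj + α₃ • qk : Hq)‖^2 = (α₁-α₂+α₃)^2 := by
      rw [norm_smul, mul_pow, hJ, mul_one, Real.norm_eq_abs, sq_abs]
    rw [na, nb, norm_one, inv_one, one_mul]
    congr 1
    linear_combination 2*hs
  have hle6 : ∀ α₁ α₂ α₃ : ℝ, α₁^2 + α₂^2 + α₃^2 = 1 →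
      Real.sqrt (4 + 4*α₁*α₃) ≤ Real.sqrt 6 := by
    intro α₁ α₂ α₃ hs
    apply Real.sqrt_le_sqrt
    nlinarith [sq_nonneg (α₁ - α₃), sq_nonneg α₂]
  have part3 : (⨆ I ∈ sphereS, CExt (projPoly I (quad m 1 qb qa 1))) ≤
      ENNReal.ofReal (Real.sqrt 6) := by
    refine iSup₂_le fun I hI => ?_
    obtain ⟨hIeq, hIs⟩ := sphere_char hI
    rw [hIeq]
    have hnd : (projPoly (I.imI • qi + I.imJ • qj + I.imK • qk)
        (quad m 1 qb qa 1)).natDegree = m + 3 := by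
      rw [projPoly_quad, piProj_J_one]
      exact quad_natDegree _ _ _ _ _ one_ne_zero
    rw [CExt, hnd, if_neg (by omega : ¬ (m + 3 = 0))]
    exact ENNReal.ofReal_le_ofReal
      (by rw [part2 _ _ _ hIs]; exact hle6 _ _ _ hIs)
  refine ⟨hd1, fun α₁ α₂ α₃ hs => ⟨part2 α₁ α₂ α₃ hs, hle6 α₁ α₂ α₃ hs⟩, part3, fun h11 => ?_⟩
  refine lt_of_le_of_lt part3 ?_
  rw [ENNReal.ofReal_lt_ofReal_iff_of_nonneg (Real.sqrt_nonneg 6), hd1]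
  set D : ℝ := ((3+m : ℕ) : ℝ) with hD
  have hD11 : (11:ℝ) ≤ D := by rw [hD]; exact_mod_cast h11
  have hDpos : (0:ℝ) < D := by linarith
  have harg : (0:ℝ) ≤ 8*D^2 - 24*D + 24 := by nlinarith
  have key : D⁻¹ * Real.sqrt (8*D^2 - 24*D + 24) =
      Real.sqrt ((8*D^2 - 24*D + 24)/D^2) := by
    rw [Real.sqrt_div harg, Real.sqrt_sq hDpos.le, div_eq_inv_mul]
  rw [key]
  have h6 : (6:ℝ) < (8*D^2 - 24*D + 24)/D^2 := by
    rw [lt_div_iff₀ (by positivity)]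
    nlinarith
  calc Real.sqrt 6 < Real.sqrt ((8*D^2 - 24*D + 24)/D^2) :=
        Real.sqrt_lt_sqrt (by norm_num) h6


end
end
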